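/- arXiv:math/0510058 — 5 statements merged into one kernel-verified Lean document; each statement's English description precedes it below -/
import Mathlib

section
/- P(μ) = A_n ⊗_{A_n^0} C_μ is a projective object in the category F_n of weight A_n-modules with finite weight multiplicities: for every surjection p: S → P(μ) in F_n there is a module map j: P(μ) → S with p∘j = id. -/
open Sum

noncomputable section

/-- Defining relations of the Weyl algebra `A_n`: with `t i = ι (inl i)` and
`∂ i = ι (inr i)`, we impose `∂ i * t j = t j * ∂ i + δ_{ij}`,
`t i * t j = t j * t i` and `∂ i * ∂ j = ∂ j * ∂ i`. -/
inductive WeylRel (n : ℕ) :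
    FreeAlgebra ℂ (Fin n ⊕ Fin n) → FreeAlgebra ℂ (Fin n ⊕ Fin n) → Prop
  | dt (i j : Fin n) : WeylRel n
      (FreeAlgebra.ι ℂ (inr i) * FreeAlgebra.ι ℂ (inl j))
      (FreeAlgebra.ι ℂ (inl j) * FreeAlgebra.ι ℂ (inr i) + if i = j then 1 else 0)
  | tt (i j : Fin n) : WeylRel n
      (FreeAlgebra.ι ℂ (inl i) * FreeAlgebra.ι ℂ (inl j))
      (FreeAlgebra.ι ℂ (inl j) * FreeAlgebra.ι ℂ (inl i))
  | dd (i j : Fin n) : WeylRel n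
      (FreeAlgebra.ι ℂ (inr i) * FreeAlgebra.ι ℂ (inr j))
      (FreeAlgebra.ι ℂ (inr j) * FreeAlgebra.ι ℂ (inr i))

/-- The Weyl algebra `A_n` of polynomial differential operators on `𝔸^n`. -/
abbrev WeylAlg (n : ℕ) := RingQuot (WeylRel n)

/-- The generator `t i` of the Weyl algebra. -/
def Wt (n : ℕ) (i : Fin n) : WeylAlg n :=
  RingQuot.mkAlgHom ℂ (WeylRel n) (FreeAlgebra.ι ℂ (inl i))

/-- The generator `∂ i` of the Weyl algebra. -/
def Wd (n : ℕ) (i : Fin n) : WeylAlg n :=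
  RingQuot.mkAlgHom ℂ (WeylRel n) (FreeAlgebra.ι ℂ (inr i))

/-- The Euler elements `t i * ∂ i`. -/
def Wh (n : ℕ) (i : Fin n) : WeylAlg n := Wt n i * Wd n i

/-- The adjoint action of an element of the Weyl algebra. -/
def adW (n : ℕ) (a : WeylAlg n) : WeylAlg n →ₗ[ℂ] WeylAlg n :=
  LinearMap.mulLeft ℂ a - LinearMap.mulRight ℂ a

/-- The root (weight) component `A_n^α` of the Weyl algebra under the adjoint action
of `t 1 ∂ 1, ..., t n ∂ n`. -/
def algWt (n : ℕ) (α : Fin n → ℤ) : Submodule ℂ (WeylAlg n) :=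
  ⨅ i, Module.End.eigenspace (adW n (Wh n i)) (α i : ℂ)

/-- The action of an element of the Weyl algebra on a module, as a `ℂ`-linear
endomorphism. -/
def actE (n : ℕ) {M : Type*} [AddCommGroup M] [Module ℂ M] [Module (WeylAlg n) M]
    [IsScalarTower ℂ (WeylAlg n) M] (a : WeylAlg n) : M →ₗ[ℂ] M where
  toFun m := a • m
  map_add' := smul_add a
  map_smul' c m := smul_comm a c m

/-- The weight space of weight `ν` of a weight module over the Weyl algebra. -/
def mwt (n : ℕ) (M : Type*) [AddCommGroup M] [Module ℂ M] [Module (WeylAlg n) M]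
    [IsScalarTower ℂ (WeylAlg n) M] (ν : Fin n → ℂ) : Submodule ℂ M :=
  ⨅ i, Module.End.eigenspace (actE n (Wh n i)) (ν i)


/-- The induced module `P(μ) = A_n ⊗_{A_n^0} ℂ_μ`, realized as the quotient of `A_n`
by the left ideal generated by the elements `t i ∂ i - μ i`. -/
def Pmu (n : ℕ) (μ : Fin n → ℂ) :=
  WeylAlg n ⧸ Submodule.span (WeylAlg n)
    (Set.range fun i => Wh n i - algebraMap ℂ (WeylAlg n) (μ i))

noncomputable instance (n : ℕ) (μ : Fin n → ℂ) : AddCommGroup (Pmu n μ) :=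
  inferInstanceAs (AddCommGroup (WeylAlg n ⧸ Submodule.span (WeylAlg n)
    (Set.range fun i => Wh n i - algebraMap ℂ (WeylAlg n) (μ i))))

noncomputable instance (n : ℕ) (μ : Fin n → ℂ) : Module (WeylAlg n) (Pmu n μ) :=
  inferInstanceAs (Module (WeylAlg n) (WeylAlg n ⧸ Submodule.span (WeylAlg n)
    (Set.range fun i => Wh n i - algebraMap ℂ (WeylAlg n) (μ i))))

noncomputable instance (n : ℕ) (μ : Fin n → ℂ) : Module ℂ (Pmu n μ) :=
  inferInstanceAs (Module ℂ (WeylAlg n ⧸ Submodule.span (WeylAlg n)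
    (Set.range fun i => Wh n i - algebraMap ℂ (WeylAlg n) (μ i))))

instance (n : ℕ) (μ : Fin n → ℂ) : IsScalarTower ℂ (WeylAlg n) (Pmu n μ) :=
  inferInstanceAs (IsScalarTower ℂ (WeylAlg n) (WeylAlg n ⧸ Submodule.span (WeylAlg n)
    (Set.range fun i => Wh n i - algebraMap ℂ (WeylAlg n) (μ i))))

section Aux

variable {n : ℕ} {M : Type*} [AddCommGroup M] [Module ℂ M] [Module (WeylAlg n) M]
  [IsScalarTower ℂ (WeylAlg n) M]

lemma whSmul {ν : Fin n → ℂ} {x : M} (hx : x ∈ mwt n M ν) (i : Fin n) :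
    Wh n i • x = ν i • x := by
  rw [mwt, Submodule.mem_iInf] at hx
  have := Module.End.mem_eigenspace_iff.mp (hx i)
  simpa [actE] using this

lemma factSmul {ν : Fin n → ℂ} {x : M} (hx : x ∈ mwt n M ν) (i : Fin n) (k a : ℂ) :
    (k • (Wh n i - algebraMap ℂ (WeylAlg n) a)) • x = (k * (ν i - a)) • x := by
  rw [smul_assoc, sub_smul, algebraMap_smul, whSmul hx i, ← sub_smul, smul_smul]

lemma prodSmul {ν : Fin n → ℂ} {x : M} (hx : x ∈ mwt n M ν) {ι : Type*}
    (L : List ι) (g : ι → WeylAlg n) (K : ι → ℂ)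
    (hg : ∀ v ∈ L, ∀ y : M, y ∈ mwt n M ν → g v • y = K v • y) :
    (L.map g).prod • x = (L.map K).prod • x := by
  induction L with
  | nil => simp
  | cons v L ih =>
    have ih' := ih (fun w hw y hy => hg w (List.mem_cons_of_mem v hw) y hy)
    rw [List.map_cons, List.map_cons, List.prod_cons, List.prod_cons, mul_smul, ih',
      hg v List.mem_cons_self _ (Submodule.smul_mem _ _ hx), smul_smul]

end Aux

/-- Theorem 4 (th1), part 5: `P(μ)` is a projective object in the category `F_n` of
weight `A_n`-modules with finite weight multiplicities: every surjection
`p : S → P(μ)` in `F_n` admits a section `j` with `p ∘ j = id`. -/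
theorem Pmu_projective (n : ℕ) (μ : Fin n → ℂ)
    (S : Type) [AddCommGroup S] [Module ℂ S] [Module (WeylAlg n) S]
    [IsScalarTower ℂ (WeylAlg n) S]
    (hwt : ⨆ ν : Fin n → ℂ, mwt n S ν = ⊤)
    (hfin : ∀ ν : Fin n → ℂ, FiniteDimensional ℂ (mwt n S ν))
    (p : S →ₗ[WeylAlg n] Pmu n μ) (hp : Function.Surjective p) :
    ∃ j : Pmu n μ →ₗ[WeylAlg n] S, p ∘ₗ j = LinearMap.id := by
  classical
  set I : Submodule (WeylAlg n) (WeylAlg n) := Submodule.span (WeylAlg n)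
    (Set.range fun i => Wh n i - algebraMap ℂ (WeylAlg n) (μ i)) with hI
  let e : Pmu n μ := I.mkQ 1
  have key : ∀ i : Fin n, Wh n i • (I.mkQ 1) = μ i • (I.mkQ 1) := by
    intro i
    have h0 : I.mkQ (Wh n i - algebraMap ℂ (WeylAlg n) (μ i)) = 0 := by
      rw [Submodule.mkQ_apply, Submodule.Quotient.mk_eq_zero]
      exact Submodule.subset_span ⟨i, rfl⟩
    rw [map_sub, sub_eq_zero] at h0
    calc Wh n i • I.mkQ 1 = I.mkQ (Wh n i • 1) := (map_smul _ _ _).symm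
      _ = I.mkQ (Wh n i) := by rw [smul_eq_mul, mul_one]
      _ = I.mkQ (algebraMap ℂ (WeylAlg n) (μ i)) := h0
      _ = I.mkQ (algebraMap ℂ (WeylAlg n) (μ i) • 1) := by rw [smul_eq_mul, mul_one]
      _ = algebraMap ℂ (WeylAlg n) (μ i) • I.mkQ 1 := map_smul _ _ _
      _ = μ i • I.mkQ 1 := algebraMap_smul (WeylAlg n) (μ i) (I.mkQ 1)
  have he : e ∈ mwt n (Pmu n μ) μ := by
    rw [mwt, Submodule.mem_iInf]
    intro i
    rw [Module.End.mem_eigenspace_iff]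
    show Wh n i • e = μ i • e
    exact key i
  obtain ⟨s₀, hs₀⟩ := hp e
  have hs₀mem : s₀ ∈ ⨆ ν : Fin n → ℂ, mwt n S ν := by rw [hwt]; trivial
  obtain ⟨f, hf, hsum⟩ := (Submodule.mem_iSup_iff_exists_finsupp _ _).mp hs₀mem
  let idx : ∀ ν : Fin n → ℂ, ν ≠ μ → Fin n := fun ν h => (Function.ne_iff.mp h).choose
  have hidx : ∀ (ν : Fin n → ℂ) (h : ν ≠ μ), ν (idx ν h) ≠ μ (idx ν h) :=
    fun ν h => (Function.ne_iff.mp h).choose_spec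
  let g : (Fin n → ℂ) → WeylAlg n := fun ν =>
    if h : ν = μ then 1
    else (μ (idx ν h) - ν (idx ν h))⁻¹ •
      (Wh n (idx ν h) - algebraMap ℂ (WeylAlg n) (ν (idx ν h)))
  let L := (f.support.erase μ).toList
  have hL : ∀ v ∈ L, v ≠ μ := fun v hv => (Finset.mem_erase.mp (Finset.mem_toList.mp hv)).1
  set c : WeylAlg n := (L.map g).prod with hc
  have hgone : ∀ (M : Type) [AddCommGroup M] [Module ℂ M] [Module (WeylAlg n) M]
      [IsScalarTower ℂ (WeylAlg n) M],
      ∀ v ∈ L, ∀ y : M, y ∈ mwt n M μ → g v • y = (fun _ : Fin n → ℂ => (1:ℂ)) v • y := by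
    intro M _ _ _ _ v hv y hy
    have hvμ := hL v hv
    have h1 : g v = (μ (idx v hvμ) - v (idx v hvμ))⁻¹ •
        (Wh n (idx v hvμ) - algebraMap ℂ (WeylAlg n) (v (idx v hvμ))) := dif_neg hvμ
    rw [h1, factSmul hy, inv_mul_cancel₀ (sub_ne_zero.mpr (Ne.symm (hidx v hvμ)))]
  have hce : c • e = e := by
    have := prodSmul he L g _ (hgone (Pmu n μ))
    rw [hc]
    simpa using this
  have hcomp : ∀ ν' ∈ f.support, c • f ν' = if ν' = μ then f μ else 0 := by
    intro ν' hν'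
    by_cases hq : ν' = μ
    · subst hq
      rw [if_pos rfl]
      have := prodSmul (hf ν') L g _ (hgone S)
      rw [hc]
      simpa using this
    · rw [if_neg hq]
      set K : (Fin n → ℂ) → ℂ := fun v =>
        if h : v = μ then 1
        else (μ (idx v h) - v (idx v h))⁻¹ * (ν' (idx v h) - v (idx v h)) with hKdef
      have hgK : ∀ v ∈ L, ∀ y : S, y ∈ mwt n S ν' → g v • y = K v • y := by
        intro v hv y hy
        have hvμ := hL v hv
        have h1 : g v = (μ (idx v hvμ) - v (idx v hvμ))⁻¹ •
            (Wh n (idx v hvμ) - algebraMap ℂ (WeylAlg n) (v (idx v hvμ))) := dif_neg hvμ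
        have h2 : K v = (μ (idx v hvμ) - v (idx v hvμ))⁻¹ *
            (ν' (idx v hvμ) - v (idx v hvμ)) := dif_neg hvμ
        rw [h1, h2, factSmul hy]
      have hzero : (L.map K).prod = 0 := by
        apply List.prod_eq_zero
        refine List.mem_map.mpr ⟨ν', ?_, ?_⟩
        · rw [Finset.mem_toList, Finset.mem_erase]
          exact ⟨hq, hν'⟩
        · have h2 : K ν' = (μ (idx ν' hq) - ν' (idx ν' hq))⁻¹ *
              (ν' (idx ν' hq) - ν' (idx ν' hq)) := dif_neg hq
          rw [h2, sub_self, mul_zero]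
      rw [hc, prodSmul (hf ν') L g K hgK, hzero, zero_smul]
  have hs : c • s₀ = if μ ∈ f.support then f μ else 0 := by
    rw [← hsum, Finsupp.sum, Finset.smul_sum, Finset.sum_congr rfl hcomp]
    exact Finset.sum_ite_eq' f.support μ (fun _ => f μ)
  have hmemres : c • s₀ ∈ mwt n S μ := by
    rw [hs]
    split_ifs
    · exact hf μ
    · exact Submodule.zero_mem _
  have hpres : p (c • s₀) = e := by rw [map_smul, hs₀, hce]
  let φ : WeylAlg n →ₗ[WeylAlg n] S :=
    { toFun := fun a => a • (c • s₀)
      map_add' := fun a b => add_smul a b _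
      map_smul' := fun r a => mul_smul r a _ }
  have hker : I ≤ LinearMap.ker φ := by
    rw [hI, Submodule.span_le]
    rintro _ ⟨i, rfl⟩
    rw [SetLike.mem_coe, LinearMap.mem_ker]
    show (Wh n i - algebraMap ℂ (WeylAlg n) (μ i)) • (c • s₀) = 0
    rw [sub_smul, whSmul hmemres i, algebraMap_smul, sub_self]
  refine ⟨I.liftQ φ hker, ?_⟩
  apply Submodule.linearMap_qext
  refine LinearMap.ext fun a => ?_
  show p ((I.liftQ φ hker) (I.mkQ a)) = I.mkQ a
  rw [Submodule.mkQ_apply, Submodule.liftQ_apply]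
  show p (a • (c • s₀)) = I.mkQ a
  rw [map_smul, hpres]
  show a • I.mkQ 1 = I.mkQ a
  rw [← map_smul, smul_eq_mul, mul_one]
end
end

section
/- Two simple weight A_n-modules with finite weight multiplicities are isomorphic if and only if their supports intersect (equivalently, they are nonisomorphic if and only if their supports are disjoint). -/
open Sum

noncomputable section

namespace WeylProof

variable {n : ℕ}


lemma rel_dt (i j : Fin n) :
    Wd n i * Wt n j = Wt n j * Wd n i + if i = j then 1 else 0 := by
  have h := RingQuot.mkAlgHom_rel ℂ (WeylRel.dt (n := n) i j)
  simp only [map_mul, map_add] at h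
  rw [Wd, Wt, h]
  congr 1
  split_ifs <;> simp

lemma rel_dt_same (i : Fin n) : Wd n i * Wt n i = Wt n i * Wd n i + 1 := by
  simpa using rel_dt i i

lemma comm_tt (i j : Fin n) : Commute (Wt n i) (Wt n j) := by
  have h := RingQuot.mkAlgHom_rel ℂ (WeylRel.tt (n := n) i j)
  simp only [map_mul] at h
  exact h

lemma comm_dd (i j : Fin n) : Commute (Wd n i) (Wd n j) := by
  have h := RingQuot.mkAlgHom_rel ℂ (WeylRel.dd (n := n) i j)
  simp only [map_mul] at h
  exact h

lemma comm_dt (i j : Fin n) (hij : i ≠ j) : Commute (Wd n i) (Wt n j) := by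
  have h := rel_dt i j
  rw [if_neg hij, add_zero] at h
  exact h

lemma comm_td (i j : Fin n) (hij : i ≠ j) : Commute (Wt n i) (Wd n j) :=
  (comm_dt j i (fun h => hij h.symm)).symm

lemma wh_wt_same (i : Fin n) : Wh n i * Wt n i = Wt n i * Wh n i + Wt n i := by
  rw [Wh, mul_assoc, rel_dt_same, mul_add, mul_one, ← mul_assoc]

lemma wh_wd_same (i : Fin n) : Wh n i * Wd n i = Wd n i * Wh n i - Wd n i := by
  have : Wd n i * Wh n i = Wh n i * Wd n i + Wd n i := by
    rw [Wh, ← mul_assoc, rel_dt_same, add_mul, one_mul]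
  rw [this, add_sub_cancel_right]

lemma comm_wh_wt (i j : Fin n) (hij : i ≠ j) : Commute (Wh n i) (Wt n j) :=
  Commute.mul_left (comm_tt i j) (comm_dt i j hij)

lemma comm_wh_wd (i j : Fin n) (hij : i ≠ j) : Commute (Wh n i) (Wd n j) :=
  Commute.mul_left (comm_td i j hij) (comm_dd i j)

lemma comm_wh_wh (i j : Fin n) : Commute (Wh n i) (Wh n j) := by
  rcases eq_or_ne i j with rfl | hij
  · exact Commute.refl _
  · exact ((comm_wh_wt i j hij).mul_right (comm_wh_wd i j hij))

/-- `∂ᵢ tᵢ^(k+1) = tᵢ^(k+1) ∂ᵢ + (k+1) tᵢ^k`. -/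
lemma wd_wt_pow (i : Fin n) (k : ℕ) :
    Wd n i * Wt n i ^ (k + 1) = Wt n i ^ (k + 1) * Wd n i + ((k : ℂ) + 1) • Wt n i ^ k := by
  induction k with
  | zero => simpa using rel_dt_same i
  | succ k ih =>
    have : Wd n i * Wt n i ^ (k + 2) = (Wd n i * Wt n i ^ (k+1)) * Wt n i := by
      rw [mul_assoc, ← pow_succ]
    rw [this, ih, add_mul, smul_mul_assoc, mul_assoc, rel_dt_same, mul_add, mul_one,
      ← mul_assoc, ← pow_succ, ← pow_succ]
    push_cast
    module

lemma wh_wt_pow (i : Fin n) (k : ℕ) :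
    Wh n i * Wt n i ^ k = Wt n i ^ k * Wh n i + (k : ℂ) • Wt n i ^ k := by
  induction k with
  | zero => simp
  | succ k ih =>
    rw [pow_succ, ← mul_assoc, ih, add_mul, smul_mul_assoc, mul_assoc, wh_wt_same,
      mul_add, ← mul_assoc, ← pow_succ]
    push_cast
    module

lemma wh_wd_pow (i : Fin n) (k : ℕ) :
    Wh n i * Wd n i ^ k = Wd n i ^ k * Wh n i - (k : ℂ) • Wd n i ^ k := by
  induction k with
  | zero => simp
  | succ k ih =>
    rw [pow_succ, ← mul_assoc, ih, sub_mul, smul_mul_assoc, mul_assoc, wh_wd_same,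
      mul_sub, ← mul_assoc, ← pow_succ]
    push_cast
    module


lemma tpow_comm (a : Fin n → ℕ) :
    (((Finset.univ : Finset (Fin n)) : Set (Fin n))).Pairwise (Function.onFun Commute fun i => Wt n i ^ a i) :=
  fun i _ j _ _ => (comm_tt i j).pow_pow _ _

lemma dpow_comm (b : Fin n → ℕ) :
    (((Finset.univ : Finset (Fin n)) : Set (Fin n))).Pairwise (Function.onFun Commute fun i => Wd n i ^ b i) :=
  fun i _ j _ _ => (comm_dd i j).pow_pow _ _

/-- `t^a = ∏ tᵢ^(aᵢ)`. -/
def Tp (a : Fin n → ℕ) : WeylAlg n :=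
  Finset.univ.noncommProd (fun i => Wt n i ^ a i) (tpow_comm a)

/-- `∂^b = ∏ ∂ᵢ^(bᵢ)`. -/
def Dp (b : Fin n → ℕ) : WeylAlg n :=
  Finset.univ.noncommProd (fun i => Wd n i ^ b i) (dpow_comm b)

lemma Tp_zero (a : Fin n → ℕ) (ha : ∀ i, a i = 0) : Tp a = 1 := by
  rw [Tp, Finset.noncommProd_eq_pow_card _ _ _ 1 (fun i _ => by rw [ha i, pow_zero]), one_pow]

lemma Dp_zero (b : Fin n → ℕ) (hb : ∀ i, b i = 0) : Dp b = 1 := by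
  rw [Dp, Finset.noncommProd_eq_pow_card _ _ _ 1 (fun i _ => by rw [hb i, pow_zero]), one_pow]

/-- Pull the `i`-th factor out of `Tp` on the left. -/
lemma Tp_extract (a : Fin n → ℕ) (i : Fin n) :
    Tp a = Wt n i ^ a i * Tp (Function.update a i 0) := by
  have h1 := Finset.mul_noncommProd_erase Finset.univ (Finset.mem_univ i) _ (tpow_comm a)
  have h2 := Finset.mul_noncommProd_erase Finset.univ (Finset.mem_univ i) _
    (tpow_comm (Function.update a i 0))
  have h3 : (Finset.univ.erase i).noncommProd (fun j => Wt n j ^ a j)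
      (fun x _ y _ _ => (comm_tt x y).pow_pow _ _) =
      (Finset.univ.erase i).noncommProd (fun j => Wt n j ^ (Function.update a i 0 j)) _ :=
    Finset.noncommProd_congr rfl (fun j hj => by
      rw [Function.update_of_ne (Finset.ne_of_mem_erase hj)]) _
  rw [Tp, Tp, ← h1, ← h2, Function.update_self, pow_zero, one_mul, h3]

/-- Pull the `i`-th factor out of `Dp` on the right. -/
lemma Dp_extract (b : Fin n → ℕ) (i : Fin n) :
    Dp b = Dp (Function.update b i 0) * Wd n i ^ b i := by
  have h1 := Finset.noncommProd_erase_mul Finset.univ (Finset.mem_univ i) _ (dpow_comm b)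
  have h2 := Finset.noncommProd_erase_mul Finset.univ (Finset.mem_univ i) _
    (dpow_comm (Function.update b i 0))
  have h3 : (Finset.univ.erase i).noncommProd (fun j => Wd n j ^ b j)
      (fun x _ y _ _ => (comm_dd x y).pow_pow _ _) =
      (Finset.univ.erase i).noncommProd (fun j => Wd n j ^ (Function.update b i 0 j)) _ :=
    Finset.noncommProd_congr rfl (fun j hj => by
      rw [Function.update_of_ne (Finset.ne_of_mem_erase hj)]) _
  rw [Dp, Dp, ← h1, ← h2, Function.update_self, pow_zero, mul_one, h3]

lemma commute_wdpow_Dp0 (b : Fin n → ℕ) (i : Fin n) (k : ℕ) :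
    Commute (Wd n i ^ k) (Dp (Function.update b i 0)) := by
  apply Finset.noncommProd_commute
  intro j _
  rcases eq_or_ne j i with rfl | hj
  · simp
  · exact ((comm_dd i j).pow_pow _ _)

lemma Dp_extract' (b : Fin n → ℕ) (i : Fin n) :
    Dp b = Wd n i ^ b i * Dp (Function.update b i 0) := by
  rw [Dp_extract b i, ← (commute_wdpow_Dp0 b i (b i)).eq]

lemma commute_wd_Tp0 (a : Fin n → ℕ) (i : Fin n) :
    Commute (Wd n i) (Tp (Function.update a i 0)) := by
  apply Finset.noncommProd_commute
  intro j _
  rcases eq_or_ne j i with rfl | hj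
  · simp
  · exact (comm_dt i j (fun h => hj h.symm)).pow_right _

lemma commute_wh_Tp0 (a : Fin n → ℕ) (i : Fin n) :
    Commute (Wh n i) (Tp (Function.update a i 0)) := by
  apply Finset.noncommProd_commute
  intro j _
  rcases eq_or_ne j i with rfl | hj
  · simp
  · exact (comm_wh_wt i j (fun h => hj h.symm)).pow_right _

lemma commute_wh_Dp0 (b : Fin n → ℕ) (i : Fin n) :
    Commute (Wh n i) (Dp (Function.update b i 0)) := by
  apply Finset.noncommProd_commute
  intro j _
  rcases eq_or_ne j i with rfl | hj
  · simp
  · exact (comm_wh_wd i j (fun h => hj h.symm)).pow_right _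

lemma wt_Tp (i : Fin n) (a : Fin n → ℕ) :
    Wt n i * Tp a = Tp (Function.update a i (a i + 1)) := by
  rw [Tp_extract a i, ← mul_assoc, ← pow_succ',
    Tp_extract (Function.update a i (a i + 1)) i]
  simp [Function.update_idem]

lemma wd_Dp (i : Fin n) (b : Fin n → ℕ) :
    Wd n i * Dp b = Dp (Function.update b i (b i + 1)) := by
  rw [Dp_extract' b i, ← mul_assoc, ← pow_succ',
    Dp_extract' (Function.update b i (b i + 1)) i]
  simp [Function.update_idem]

lemma wd_Tp (i : Fin n) (a : Fin n → ℕ) :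
    Wd n i * Tp a = Tp a * Wd n i + (a i : ℂ) • Tp (Function.update a i (a i - 1)) := by
  cases h : a i with
  | zero =>
    have ha : Function.update a i 0 = a := by rw [← h]; exact Function.update_eq_self i a
    have hc : Commute (Wd n i) (Tp a) := by
      have := commute_wd_Tp0 a i; rwa [ha] at this
    simp [hc.eq]
  | succ k =>
    have hTa : Tp a = Wt n i ^ (k + 1) * Tp (Function.update a i 0) := by
      rw [Tp_extract a i, h]
    have hTa' : Tp (Function.update a i k) = Wt n i ^ k * Tp (Function.update a i 0) := by
      rw [Tp_extract (Function.update a i k) i]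
      simp [Function.update_idem]
    have hcomm := commute_wd_Tp0 a i
    rw [Nat.add_sub_cancel, hTa', hTa, ← mul_assoc, wd_wt_pow, add_mul, smul_mul_assoc,
      mul_assoc, hcomm.eq, ← mul_assoc]
    push_cast
    module

lemma wh_Tp (i : Fin n) (a : Fin n → ℕ) :
    Wh n i * Tp a = Tp a * Wh n i + (a i : ℂ) • Tp a := by
  have hcomm := commute_wh_Tp0 a i
  rw [Tp_extract a i, ← mul_assoc, wh_wt_pow, add_mul, smul_mul_assoc, mul_assoc, hcomm.eq,
    ← mul_assoc]

lemma wh_Dp (i : Fin n) (b : Fin n → ℕ) :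
    Wh n i * Dp b = Dp b * Wh n i - (b i : ℂ) • Dp b := by
  have hcomm := commute_wh_Dp0 b i
  rw [Dp_extract' b i, ← mul_assoc, wh_wd_pow, sub_mul, smul_mul_assoc, mul_assoc, hcomm.eq,
    ← mul_assoc]

lemma wh_TpDp (i : Fin n) (a b : Fin n → ℕ) :
    Wh n i * (Tp a * Dp b) =
      (Tp a * Dp b) * Wh n i + ((a i : ℂ) - (b i : ℂ)) • (Tp a * Dp b) := by
  rw [← mul_assoc, wh_Tp, add_mul, smul_mul_assoc, mul_assoc, wh_Dp, mul_sub, mul_smul_comm,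
    ← mul_assoc]
  module

/-- The set of normal monomials `t^a ∂^b`. -/
def Gset (n : ℕ) : Set (WeylAlg n) :=
  Set.range fun p : (Fin n → ℕ) × (Fin n → ℕ) => Tp p.1 * Dp p.2

lemma mem_Gset (a b : Fin n → ℕ) : Tp a * Dp b ∈ Gset n := ⟨(a, b), rfl⟩

lemma one_mem_spanG : (1 : WeylAlg n) ∈ Submodule.span ℂ (Gset n) := by
  have : Tp (fun _ => 0) * Dp (fun _ => 0) = (1 : WeylAlg n) := by
    rw [Tp_zero _ (fun _ => rfl), Dp_zero _ (fun _ => rfl), one_mul]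
  rw [← this]
  exact Submodule.subset_span (mem_Gset _ _)

lemma wt_mul_mem_spanG (i : Fin n) (s : WeylAlg n) (hs : s ∈ Submodule.span ℂ (Gset n)) :
    Wt n i * s ∈ Submodule.span ℂ (Gset n) := by
  induction hs using Submodule.span_induction with
  | mem x hx =>
    obtain ⟨⟨a, b⟩, rfl⟩ := hx
    rw [← mul_assoc, wt_Tp]
    exact Submodule.subset_span (mem_Gset _ _)
  | zero => simp
  | add x y hx hy ihx ihy => rw [mul_add]; exact Submodule.add_mem _ ihx ihy
  | smul c x hx ihx => rw [mul_smul_comm]; exact Submodule.smul_mem _ _ ihx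

lemma wd_mul_mem_spanG (i : Fin n) (s : WeylAlg n) (hs : s ∈ Submodule.span ℂ (Gset n)) :
    Wd n i * s ∈ Submodule.span ℂ (Gset n) := by
  induction hs using Submodule.span_induction with
  | mem x hx =>
    obtain ⟨⟨a, b⟩, rfl⟩ := hx
    rw [← mul_assoc, wd_Tp, add_mul, smul_mul_assoc, mul_assoc, wd_Dp]
    exact Submodule.add_mem _ (Submodule.subset_span (mem_Gset _ _))
      (Submodule.smul_mem _ _ (Submodule.subset_span (mem_Gset _ _)))
  | zero => simp
  | add x y hx hy ihx ihy => rw [mul_add]; exact Submodule.add_mem _ ihx ihy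
  | smul c x hx ihx => rw [mul_smul_comm]; exact Submodule.smul_mem _ _ ihx

lemma mul_mem_spanG (x : WeylAlg n) (s : WeylAlg n)
    (hs : s ∈ Submodule.span ℂ (Gset n)) : x * s ∈ Submodule.span ℂ (Gset n) := by
  obtain ⟨y, rfl⟩ := RingQuot.mkAlgHom_surjective ℂ (WeylRel n) x
  induction y using FreeAlgebra.induction generalizing s with
  | grade0 r =>
    rw [AlgHom.commutes, ← Algebra.smul_def]
    exact Submodule.smul_mem _ _ hs
  | grade1 v =>
    cases v with
    | inl i => exact wt_mul_mem_spanG i s hs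
    | inr i => exact wd_mul_mem_spanG i s hs
  | mul y z ihy ihz =>
    rw [map_mul, mul_assoc]
    exact ihy _ (ihz _ hs)
  | add y z ihy ihz =>
    rw [map_add, add_mul]
    exact Submodule.add_mem _ (ihy _ hs) (ihz _ hs)

lemma span_Gset_top : Submodule.span ℂ (Gset n) = ⊤ := by
  rw [eq_top_iff]
  intro x _
  simpa using mul_mem_spanG x 1 one_mem_spanG
section ModuleLemmas

variable {P : Type*} [AddCommGroup P] [Module ℂ P] [Module (WeylAlg n) P]
  [IsScalarTower ℂ (WeylAlg n) P]

lemma mem_mwt_iff {ν : Fin n → ℂ} {x : P} :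
    x ∈ mwt n P ν ↔ ∀ i, Wh n i • x = ν i • x := by
  simp only [mwt, Submodule.mem_iInf, Module.End.mem_eigenspace_iff]
  rfl

lemma TpDp_smul_mem_mwt (a b : Fin n → ℕ) {ν : Fin n → ℂ} {v : P} (hv : v ∈ mwt n P ν) :
    (Tp a * Dp b) • v ∈ mwt n P (fun i => ν i + ((a i : ℂ) - (b i : ℂ))) := by
  rw [mem_mwt_iff] at hv ⊢
  intro i
  rw [← mul_smul, wh_TpDp, add_smul, mul_smul, hv i, smul_comm (Tp a * Dp b) (ν i),
    smul_assoc, add_smul]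

lemma TpDp_diag_smul (a : Fin n → ℕ) (ν : Fin n → ℂ) (v : P) (hv : v ∈ mwt n P ν) :
    ∃ c : ℂ, (Tp a * Dp a) • v = c • v := by
  classical
  rw [mem_mwt_iff] at hv
  suffices H : ∀ (k : ℕ) (a : Fin n → ℕ) (ν : Fin n → ℂ) (v : P),
      (∀ i, Wh n i • v = ν i • v) → (∑ i, a i) = k →
      ∃ c : ℂ, (Tp a * Dp a) • v = c • v from H _ a ν v hv rfl
  intro k
  induction k using Nat.strong_induction_on with
  | _ k ih =>
  intro a ν v hv hsum
  by_cases hz : ∀ i, a i = 0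
  · exact ⟨1, by rw [Tp_zero a hz, Dp_zero a hz, one_mul, one_smul, one_smul]⟩
  · push_neg at hz
    obtain ⟨i, hi⟩ := hz
    set a' := Function.update a i (a i - 1) with ha'
    have hT : Wt n i * Tp a' = Tp a := by
      rw [wt_Tp]
      congr 1
      rw [ha', Function.update_idem, Function.update_self, Nat.sub_add_cancel
        (Nat.one_le_iff_ne_zero.mpr hi), Function.update_eq_self]
    have hD : Dp a' * Wd n i = Dp a := by
      rw [Dp_extract a' i, ha', Function.update_idem, Function.update_self, mul_assoc,
        ← pow_succ, Nat.sub_add_cancel (Nat.one_le_iff_ne_zero.mpr hi), ← Dp_extract]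
    set v' := Wd n i • v with hv'def
    have hv' : ∀ j, Wh n j • v' = (Function.update ν i (ν i - 1)) j • v' := by
      intro j
      rcases eq_or_ne j i with rfl | hj
      · rw [hv'def, ← mul_smul, wh_wd_same, sub_smul, mul_smul, hv j,
          Function.update_self, smul_comm (Wd n j) (ν j), sub_smul, one_smul]
      · rw [hv'def, ← mul_smul, (comm_wh_wd j i hj).eq, mul_smul, hv j,
          smul_comm (Wd n i) (ν j), Function.update_of_ne hj]
    have hlt : ∑ j, a' j < k := by
      have h1 : ∑ j, a' j + 1 = ∑ j, a j := by
        rw [ha', Finset.sum_update_of_mem (Finset.mem_univ i),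
          ← Finset.add_sum_erase _ a (Finset.mem_univ i), Finset.erase_eq]
        omega
      omega
    obtain ⟨c, hc⟩ := ih (∑ j, a' j) hlt a' (Function.update ν i (ν i - 1)) v' hv' rfl
    refine ⟨c * ν i, ?_⟩
    calc (Tp a * Dp a) • v = Wt n i • ((Tp a' * Dp a') • v') := by
          rw [← hT, ← hD, hv'def]
          simp only [mul_smul, mul_assoc]
      _ = Wt n i • (c • v') := by rw [hc]
      _ = c • ((Wt n i * Wd n i) • v) := by
          rw [hv'def, smul_comm, mul_smul]
      _ = (c * ν i) • v := by
          rw [show Wt n i * Wd n i = Wh n i from rfl, hv i, smul_smul]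

lemma indep_key {ι : Type} (F : Finset ι) (wt : ι → Fin n → ℂ) (ν : Fin n → ℂ)
    (hne : ∀ j ∈ F, wt j ≠ ν) (z : ι → P)
    (hz : ∀ j ∈ F, ∀ i, Wh n i • z j = wt j i • z j)
    (hs : ∀ i, Wh n i • (∑ j ∈ F, z j) = ν i • ∑ j ∈ F, z j) :
    ∑ j ∈ F, z j = 0 := by
  classical
  induction F using Finset.strongInduction generalizing z with
  | _ F ih =>
  rcases F.eq_empty_or_nonempty with rfl | ⟨j0, hj0⟩
  · simp
  · have hwj : wt j0 ≠ ν := hne j0 hj0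
    obtain ⟨i0, hi0⟩ : ∃ i, wt j0 i ≠ ν i := by
      by_contra hcon; push_neg at hcon; exact hwj (funext hcon)
    set z' : ι → P := fun κ => (wt κ i0 - wt j0 i0) • z κ with hz'def
    have hsum' : ∑ j ∈ F.erase j0, z' j = (ν i0 - wt j0 i0) • ∑ j ∈ F, z j := by
      rw [Finset.sum_erase _ (by simp [hz'def])]
      have h1 : ∑ j ∈ F, z' j = (Wh n i0 • ∑ j ∈ F, z j) - wt j0 i0 • ∑ j ∈ F, z j := by
        rw [Finset.smul_sum, Finset.smul_sum, ← Finset.sum_sub_distrib]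
        refine Finset.sum_congr rfl (fun j hj => ?_)
        show (wt j i0 - wt j0 i0) • z j = _
        rw [hz j hj i0, sub_smul]
      rw [h1, hs i0, sub_smul]
    have h0 : ∑ j ∈ F.erase j0, z' j = 0 := by
      refine ih (F.erase j0) (Finset.erase_ssubset hj0)
        (fun j hj => hne j (Finset.mem_of_mem_erase hj)) z' ?_ ?_
      · intro j hj i
        show Wh n i • ((wt j i0 - wt j0 i0) • z j) = wt j i • ((wt j i0 - wt j0 i0) • z j)
        rw [smul_comm, hz j (Finset.mem_of_mem_erase hj) i, smul_comm]
      · intro i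
        rw [hsum', smul_comm, hs i, smul_comm]
    rw [hsum'] at h0
    rcases smul_eq_zero.mp h0 with h | h
    · exact absurd (by linear_combination h : ν i0 = wt j0 i0) (Ne.symm hi0)
    · exact h

end ModuleLemmas
section ClaimA

variable {P : Type*} [AddCommGroup P] [Module ℂ P] [Module (WeylAlg n) P]
  [IsScalarTower ℂ (WeylAlg n) P]

lemma span_singleton_le_mwt {ν : Fin n → ℂ} {w : P} (hw : w ∈ mwt n P ν) :
    Submodule.span ℂ ({w} : Set P) ≤ mwt n P ν :=
  Submodule.span_le.mpr (by simpa using hw)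

/-- Any element of the cyclic module generated by a weight vector `w` of weight `ν`
which again has weight `ν` is a scalar multiple of `w`. -/
lemma claimA {ν : Fin n → ℂ} {w : P} (hw : w ∈ mwt n P ν) {x : P}
    (hx : x ∈ Submodule.span (WeylAlg n) ({w} : Set P)) (hxν : x ∈ mwt n P ν) :
    x ∈ Submodule.span ℂ ({w} : Set P) := by
  classical
  obtain ⟨u, rfl⟩ := Submodule.mem_span_singleton.mp hx
  set Z : Submodule ℂ P := Submodule.span ℂ ({w} : Set P) ⊔
    ⨆ κ : {α : Fin n → ℤ // α ≠ 0}, mwt n P (fun i => ν i + (κ.1 i : ℂ)) with hZ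
  have hmemZ : ∀ v : WeylAlg n, v • w ∈ Z := by
    intro v
    have hu : v ∈ Submodule.span ℂ (Gset n) := by rw [span_Gset_top]; trivial
    induction hu using Submodule.span_induction with
    | mem g hg =>
      obtain ⟨⟨a, b⟩, rfl⟩ := hg
      by_cases hab : a = b
      · subst hab
        obtain ⟨c, hc⟩ := TpDp_diag_smul a ν w hw
        rw [hc]
        exact Submodule.mem_sup_left
          (Submodule.smul_mem _ _ (Submodule.mem_span_singleton_self w))
      · obtain ⟨i, hi⟩ := Function.ne_iff.mp hab
        have hκ : (fun i => ((a i : ℤ) - (b i : ℤ))) ≠ (0 : Fin n → ℤ) := by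
          intro hcon
          apply hi
          have h2 := congrFun hcon i
          simpa [sub_eq_zero] using h2
        refine Submodule.mem_sup_right (Submodule.mem_iSup_of_mem ⟨_, hκ⟩ ?_)
        have hmem := TpDp_smul_mem_mwt a b hw
        convert hmem using 2
        funext j
        push_cast
        ring
    | zero => rw [zero_smul]; exact Z.zero_mem
    | add u₁ u₂ hu₁ hu₂ ih₁ ih₂ => rw [add_smul]; exact Z.add_mem ih₁ ih₂
    | smul c u₁ hu₁ ih₁ => rw [smul_assoc]; exact Z.smul_mem c ih₁
  obtain ⟨y, hy, z, hzZ, hyz⟩ := Submodule.mem_sup.mp (hmemZ u)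
  have hzν : z ∈ mwt n P ν := by
    have hzx : z = u • w - y := by rw [← hyz]; abel
    rw [hzx]
    exact Submodule.sub_mem _ hxν (span_singleton_le_mwt hw hy)
  obtain ⟨f, hf, hfsum⟩ := (Submodule.mem_iSup_iff_exists_finsupp _ z).mp hzZ
  have hss : ∑ κ ∈ f.support, f κ = z := hfsum
  have hz0 : z = 0 := by
    rw [← hss]
    refine indep_key f.support (fun κ => fun i => ν i + (κ.1 i : ℂ)) ν ?_ (fun κ => f κ) ?_ ?_
    · intro κ _ hcon
      obtain ⟨i, hi⟩ := Function.ne_iff.mp κ.2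
      apply hi
      have h2 := congrFun hcon i
      have h3 : (κ.1 i : ℂ) = 0 := by
        have := add_eq_left.mp h2
        exact this
      exact_mod_cast h3
    · intro κ _ i
      exact mem_mwt_iff.mp (hf κ) i
    · intro i
      rw [hss]
      exact mem_mwt_iff.mp hzν i
  rw [← hyz, hz0, add_zero]
  exact hy

end ClaimA

end WeylProof

/-- Corollary (cor111): two simple weight `A_n`-modules with finite weight
multiplicities are isomorphic if and only if their supports intersect. -/
theorem simple_weight_modules_iso_iff_supports_intersect (n : ℕ)
    (M : Type) [AddCommGroup M] [Module ℂ M] [Module (WeylAlg n) M]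
    [IsScalarTower ℂ (WeylAlg n) M]
    (N : Type) [AddCommGroup N] [Module ℂ N] [Module (WeylAlg n) N]
    [IsScalarTower ℂ (WeylAlg n) N]
    (hM : IsSimpleModule (WeylAlg n) M) (hN : IsSimpleModule (WeylAlg n) N)
    (hwtM : ⨆ ν : Fin n → ℂ, mwt n M ν = ⊤)
    (hwtN : ⨆ ν : Fin n → ℂ, mwt n N ν = ⊤)
    (hfinM : ∀ ν : Fin n → ℂ, FiniteDimensional ℂ (mwt n M ν))
    (hfinN : ∀ ν : Fin n → ℂ, FiniteDimensional ℂ (mwt n N ν)) :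
    Nonempty (M ≃ₗ[WeylAlg n] N) ↔ ∃ ν : Fin n → ℂ, mwt n M ν ≠ ⊥ ∧ mwt n N ν ≠ ⊥ := by
  classical
  haveI := hM
  haveI := hN
  constructor
  · rintro ⟨e⟩
    have hex : ∃ ν, mwt n M ν ≠ ⊥ := by
      by_contra hcon
      push_neg at hcon
      have h0 : (⊤ : Submodule ℂ M) = ⊥ := by
        rw [← hwtM]
        simp [hcon]
      have hall : ∀ x : M, x = 0 := fun x => by
        have hx : x ∈ (⊥ : Submodule ℂ M) := h0 ▸ Submodule.mem_top
        simpa using hx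
      have hbt : (⊥ : Submodule (WeylAlg n) M) = ⊤ := by
        ext x
        simp [hall x]
      exact bot_ne_top (α := Submodule (WeylAlg n) M) hbt
    obtain ⟨ν, hν⟩ := hex
    refine ⟨ν, hν, ?_⟩
    obtain ⟨x, hx, hx0⟩ := (Submodule.ne_bot_iff _).mp hν
    refine (Submodule.ne_bot_iff _).mpr ⟨e x, ?_, ?_⟩
    · rw [WeylProof.mem_mwt_iff] at hx ⊢
      intro i
      rw [← map_smul e, hx i, ← algebraMap_smul (WeylAlg n) (ν i) x, map_smul,
        algebraMap_smul]
    · simpa using hx0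
  · rintro ⟨ν, hMν, hNν⟩
    obtain ⟨m, hm, hm0⟩ := (Submodule.ne_bot_iff _).mp hMν
    obtain ⟨m', hm', hm'0⟩ := (Submodule.ne_bot_iff _).mp hNν
    rw [WeylProof.mem_mwt_iff] at hm hm'
    set w : M × N := (m, m') with hwdef
    have hw : w ∈ mwt n (M × N) ν := by
      rw [WeylProof.mem_mwt_iff]
      intro i
      have h1 : Wh n i • w = (Wh n i • m, Wh n i • m') := rfl
      rw [h1, hm i, hm' i]
      rfl
    set K : Submodule (WeylAlg n) (M × N) := Submodule.span (WeylAlg n) {w} with hK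
    have hwK : w ∈ K := Submodule.mem_span_singleton_self w
    have hKsc : ∀ x ∈ K, x ∈ mwt n (M × N) ν → ∃ c : ℂ, x = c • w := by
      intro x hx hxν
      obtain ⟨c, hc⟩ := Submodule.mem_span_singleton.mp (WeylProof.claimA hw hx hxν)
      exact ⟨c, hc.symm⟩
    set p1 : M × N →ₗ[WeylAlg n] M := LinearMap.fst (WeylAlg n) M N with hp1
    set p2 : M × N →ₗ[WeylAlg n] N := LinearMap.snd (WeylAlg n) M N with hp2
    have hmap1 : Submodule.map p1 K = ⊤ := by
      rcases eq_bot_or_eq_top (Submodule.map p1 K) with h | h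
      · exfalso
        have hmm : m ∈ Submodule.map p1 K := ⟨w, hwK, rfl⟩
        rw [h] at hmm
        exact hm0 (by simpa using hmm)
      · exact h
    have hmap2 : Submodule.map p2 K = ⊤ := by
      rcases eq_bot_or_eq_top (Submodule.map p2 K) with h | h
      · exfalso
        have hmm : m' ∈ Submodule.map p2 K := ⟨w, hwK, rfl⟩
        rw [h] at hmm
        exact hm'0 (by simpa using hmm)
      · exact h
    -- (m, 0) and (0, m') are not in K
    have hmK : ((m, 0) : M × N) ∉ K := by
      intro hmem
      have hwt : ((m, 0) : M × N) ∈ mwt n (M × N) ν := by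
        rw [WeylProof.mem_mwt_iff]
        intro i
        have h1 : Wh n i • ((m, 0) : M × N) = (Wh n i • m, Wh n i • (0 : N)) := rfl
        rw [h1, hm i, smul_zero]
        have h2 : ν i • ((m, 0) : M × N) = (ν i • m, ν i • (0 : N)) := rfl
        rw [h2, smul_zero]
      obtain ⟨c, hc⟩ := hKsc _ hmem hwt
      have hc2 : (0 : N) = c • m' := congrArg Prod.snd hc
      have hc0 : c = 0 := by
        rcases smul_eq_zero.mp hc2.symm with h | h
        · exact h
        · exact absurd h hm'0
      have hc1 : m = c • m := congrArg Prod.fst hc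
      rw [hc0, zero_smul] at hc1
      exact hm0 hc1
    have hm'K : ((0, m') : M × N) ∉ K := by
      intro hmem
      have hwt : ((0, m') : M × N) ∈ mwt n (M × N) ν := by
        rw [WeylProof.mem_mwt_iff]
        intro i
        have h1 : Wh n i • ((0, m') : M × N) = (Wh n i • (0 : M), Wh n i • m') := rfl
        rw [h1, hm' i, smul_zero]
        have h2 : ν i • ((0, m') : M × N) = (ν i • (0 : M), ν i • m') := rfl
        rw [h2, smul_zero]
      obtain ⟨c, hc⟩ := hKsc _ hmem hwt
      have hc2 : (0 : M) = c • m := congrArg Prod.fst hc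
      have hc0 : c = 0 := by
        rcases smul_eq_zero.mp hc2.symm with h | h
        · exact h
        · exact absurd h hm0
      have hc1 : m' = c • m' := congrArg Prod.snd hc
      rw [hc0, zero_smul] at hc1
      exact hm'0 hc1
    -- K meets the kernels trivially
    have hker2 : K ⊓ LinearMap.ker p2 = ⊥ := by
      rcases eq_bot_or_eq_top (Submodule.map p1 (K ⊓ LinearMap.ker p2)) with h | h
      · rw [eq_bot_iff]
        intro x hx
        have h1 : p1 x ∈ Submodule.map p1 (K ⊓ LinearMap.ker p2) := ⟨x, hx, rfl⟩
        rw [h] at h1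
        have hx1 : x.1 = 0 := by simpa [hp1] using h1
        have hx2 : x.2 = 0 := hx.2
        simp [Submodule.mem_bot, Prod.ext_iff, hx1, hx2]
      · exfalso
        have hmm : m ∈ Submodule.map p1 (K ⊓ LinearMap.ker p2) := h ▸ Submodule.mem_top
        obtain ⟨x, hxR, hx1⟩ := hmm
        have hx2 : x.2 = 0 := hxR.2
        have hxeq : x = ((m, 0) : M × N) := Prod.ext hx1 hx2
        exact hmK (hxeq ▸ hxR.1)
    have hker1 : K ⊓ LinearMap.ker p1 = ⊥ := by
      rcases eq_bot_or_eq_top (Submodule.map p2 (K ⊓ LinearMap.ker p1)) with h | h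
      · rw [eq_bot_iff]
        intro x hx
        have h1 : p2 x ∈ Submodule.map p2 (K ⊓ LinearMap.ker p1) := ⟨x, hx, rfl⟩
        rw [h] at h1
        have hx2 : x.2 = 0 := by simpa [hp2] using h1
        have hx1 : x.1 = 0 := hx.2
        simp [Submodule.mem_bot, Prod.ext_iff, hx1, hx2]
      · exfalso
        have hmm : m' ∈ Submodule.map p2 (K ⊓ LinearMap.ker p1) := h ▸ Submodule.mem_top
        obtain ⟨x, hxR, hx2⟩ := hmm
        have hx1 : x.1 = 0 := hxR.2
        have hxeq : x = ((0, m') : M × N) := Prod.ext hx1 hx2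
        exact hm'K (hxeq ▸ hxR.1)
    -- build the isomorphisms K ≃ M and K ≃ N
    have hbij1 : Function.Bijective (p1.comp K.subtype) := by
      constructor
      · intro x y hxy
        have hxy' : p1 (x : M × N) = p1 (y : M × N) := hxy
        have hsub : ((x : M × N) - (y : M × N)) ∈ K ⊓ LinearMap.ker p1 :=
          ⟨K.sub_mem x.2 y.2, by simp [SetLike.mem_coe, LinearMap.mem_ker, map_sub, hxy']⟩
        rw [hker1] at hsub
        have h0 : (x : M × N) - (y : M × N) = 0 := by simpa using hsub
        exact Subtype.ext (by rwa [sub_eq_zero] at h0)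
      · intro y
        have : y ∈ Submodule.map p1 K := hmap1 ▸ Submodule.mem_top
        obtain ⟨x, hxK, hxy⟩ := this
        exact ⟨⟨x, hxK⟩, hxy⟩
    have hbij2 : Function.Bijective (p2.comp K.subtype) := by
      constructor
      · intro x y hxy
        have hxy' : p2 (x : M × N) = p2 (y : M × N) := hxy
        have hsub : ((x : M × N) - (y : M × N)) ∈ K ⊓ LinearMap.ker p2 :=
          ⟨K.sub_mem x.2 y.2, by simp [SetLike.mem_coe, LinearMap.mem_ker, map_sub, hxy']⟩
        rw [hker2] at hsub
        have h0 : (x : M × N) - (y : M × N) = 0 := by simpa using hsub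
        exact Subtype.ext (by rwa [sub_eq_zero] at h0)
      · intro y
        have : y ∈ Submodule.map p2 K := hmap2 ▸ Submodule.mem_top
        obtain ⟨x, hxK, hxy⟩ := this
        exact ⟨⟨x, hxK⟩, hxy⟩
    exact ⟨((LinearEquiv.ofBijective _ hbij1).symm.trans (LinearEquiv.ofBijective _ hbij2))⟩

end
end

section
/- Every indecomposable representation of the quiver V_1 with two vertices, arrows φ^+: A_1 → A_2 and φ^−: A_2 → A_1, and relations φ^+φ^− = φ^−φ^+ = 0, is isomorphic to one of exactly four representations, with dimension vectors (1,0), (0,1), (1,1), (1,1): the two simples, and the two representations where one arrow is the identity C → C and the other is zero. -/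
open Submodule FiniteDimensional

/-- If a nonzero vector spans the whole space, the space is linearly equivalent to `ℂ`. -/
lemma aux_equiv_of_span_top {A : Type} [AddCommGroup A] [Module ℂ A]
    [FiniteDimensional ℂ A] {v : A} (hv : v ≠ 0) (htop : (ℂ ∙ v) = ⊤) :
    Nonempty (A ≃ₗ[ℂ] ℂ) := by
  have h1 : Module.finrank ℂ A = 1 := by
    rw [← finrank_top ℂ A, ← htop, finrank_span_singleton hv]
  exact nonempty_linearEquiv_of_finrank_eq (by rw [h1, Module.finrank_self])

lemma aux_subsingleton_of_top_eq_bot {A : Type} [AddCommGroup A] [Module ℂ A]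
    (h : (⊤ : Submodule ℂ A) = ⊥) : Subsingleton A := by
  refine subsingleton_of_forall_eq 0 (fun x => ?_)
  have : x ∈ (⊥ : Submodule ℂ A) := h ▸ Submodule.mem_top
  simpa using this

/-- Lemma (lm5): the quiver `V₁` (two vertices, arrows `φ⁺ : A₁ → A₂`, `φ⁻ : A₂ → A₁`,
relations `φ⁺φ⁻ = φ⁻φ⁺ = 0`) has exactly four isomorphism classes of indecomposable
representations, of dimension vectors `(1,0)`, `(0,1)`, `(1,1)`, `(1,1)`: the two
simples, and the two representations in which one arrow is the identity `ℂ → ℂ` and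
the other arrow is zero. -/
theorem quiver_V1_indecomposables
    (A₁ A₂ : Type) [AddCommGroup A₁] [Module ℂ A₁] [AddCommGroup A₂] [Module ℂ A₂]
    [FiniteDimensional ℂ A₁] [FiniteDimensional ℂ A₂]
    (φp : A₁ →ₗ[ℂ] A₂) (φm : A₂ →ₗ[ℂ] A₁)
    (h₁ : φp ∘ₗ φm = 0) (h₂ : φm ∘ₗ φp = 0)
    -- the representation is nonzero ...
    (hnz : ¬(Subsingleton A₁ ∧ Subsingleton A₂))
    -- ... and indecomposable: any decomposition into two subrepresentations is trivial
    (hind : ∀ (p₁ q₁ : Submodule ℂ A₁) (p₂ q₂ : Submodule ℂ A₂),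
      IsCompl p₁ q₁ → IsCompl p₂ q₂ →
      Submodule.map φp p₁ ≤ p₂ → Submodule.map φm p₂ ≤ p₁ →
      Submodule.map φp q₁ ≤ q₂ → Submodule.map φm q₂ ≤ q₁ →
      (p₁ = ⊥ ∧ p₂ = ⊥) ∨ (q₁ = ⊥ ∧ q₂ = ⊥)) :
    -- dimension vector (1,0): the simple at the first vertex
    (Subsingleton A₂ ∧ Nonempty (A₁ ≃ₗ[ℂ] ℂ)) ∨
    -- dimension vector (0,1): the simple at the second vertex
    (Subsingleton A₁ ∧ Nonempty (A₂ ≃ₗ[ℂ] ℂ)) ∨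
    -- dimension vector (1,1) with `φ⁺ = id`, `φ⁻ = 0`
    (∃ (e₁ : A₁ ≃ₗ[ℂ] ℂ) (e₂ : A₂ ≃ₗ[ℂ] ℂ),
      (∀ v, e₂ (φp v) = e₁ v) ∧ φm = 0) ∨
    -- dimension vector (1,1) with `φ⁻ = id`, `φ⁺ = 0`
    (∃ (e₁ : A₁ ≃ₗ[ℂ] ℂ) (e₂ : A₂ ≃ₗ[ℂ] ℂ),
      (∀ w, e₁ (φm w) = e₂ w) ∧ φp = 0) := by
  classical
  have hpm : ∀ w : A₂, φp (φm w) = 0 := fun w => by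
    have : (φp ∘ₗ φm) w = 0 := by rw [h₁]; rfl
    simpa using this
  have hmp : ∀ v : A₁, φm (φp v) = 0 := fun v => by
    have : (φm ∘ₗ φp) v = 0 := by rw [h₂]; rfl
    simpa using this
  obtain ⟨U₁, hU₁⟩ := Submodule.exists_isCompl (LinearMap.ker φp)
  obtain ⟨C₂, hC₂⟩ := Submodule.exists_isCompl (LinearMap.range φp)
  have main := hind U₁ (LinearMap.ker φp) (LinearMap.range φp) C₂ hU₁.symm hC₂
    LinearMap.map_le_range
    (by rintro _ ⟨_, ⟨v, rfl⟩, rfl⟩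
        rw [hmp v]; exact zero_mem U₁)
    (by rintro _ ⟨x, hx, rfl⟩
        rw [show φp x = 0 from hx]; exact zero_mem C₂)
    (by rintro _ ⟨w, _, rfl⟩
        exact LinearMap.mem_ker.mpr (hpm w))
  rcases main with ⟨hU₁b, _⟩ | ⟨hK₁b, hC₂b⟩
  · -- `φ⁺ = 0`
    have hK₁top : LinearMap.ker φp = ⊤ := by
      have := hU₁.sup_eq_top
      rwa [hU₁b, sup_bot_eq] at this
    have hφp0 : φp = 0 := LinearMap.ker_eq_top.mp hK₁top
    obtain ⟨C₁, hC₁⟩ := Submodule.exists_isCompl (LinearMap.range φm)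
    obtain ⟨U₂, hU₂⟩ := Submodule.exists_isCompl (LinearMap.ker φm)
    have main2 := hind (LinearMap.range φm) C₁ U₂ (LinearMap.ker φm) hC₁ hU₂.symm
      (by rw [hφp0, Submodule.map_zero]; exact bot_le)
      LinearMap.map_le_range
      (by rw [hφp0, Submodule.map_zero]; exact bot_le)
      (by rintro _ ⟨w, hw, rfl⟩
          rw [show φm w = 0 from hw]; exact zero_mem C₁)
    rcases main2 with ⟨hR₁b, _⟩ | ⟨hC₁b, hK₂b⟩
    · -- both maps are zero
      have hφm0 : φm = 0 := LinearMap.range_eq_bot.mp hR₁b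
      have triv := hind ⊤ ⊥ ⊥ ⊤ isCompl_top_bot isCompl_bot_top
        (by rw [hφp0, Submodule.map_zero])
        (by rw [Submodule.map_bot]; exact bot_le)
        (by rw [Submodule.map_bot]; exact bot_le)
        (by rw [hφm0, Submodule.map_zero])
      rcases triv with ⟨hA₁b, _⟩ | ⟨_, hA₂b⟩
      · -- `A₁ = 0`, the simple at the second vertex
        have hs₁ : Subsingleton A₁ := aux_subsingleton_of_top_eq_bot hA₁b
        have hnt₂ : Nontrivial A₂ := by
          rcases subsingleton_or_nontrivial A₂ with h | h
          · exact absurd ⟨hs₁, h⟩ hnz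
          · exact h
        obtain ⟨w, hw⟩ := exists_ne (0 : A₂)
        obtain ⟨L₂, hL₂⟩ := Submodule.exists_isCompl (ℂ ∙ w)
        have lines := hind ⊥ ⊤ (ℂ ∙ w) L₂ isCompl_bot_top hL₂
          (by rw [Submodule.map_bot]; exact bot_le)
          (by rw [hφm0, Submodule.map_zero])
          (by rw [hφp0, Submodule.map_zero]; exact bot_le)
          (by rw [hφm0, Submodule.map_zero]; exact bot_le)
        rcases lines with ⟨_, hsb⟩ | ⟨_, hL₂b⟩
        · exact absurd hsb (by simpa [Submodule.span_singleton_eq_bot] using hw)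
        · have htop₂ : (ℂ ∙ w) = ⊤ := by
            have := hL₂.sup_eq_top
            rwa [hL₂b, sup_bot_eq] at this
          exact Or.inr (Or.inl ⟨hs₁, aux_equiv_of_span_top hw htop₂⟩)
      · -- `A₂ = 0`, the simple at the first vertex
        have hs₂ : Subsingleton A₂ := aux_subsingleton_of_top_eq_bot hA₂b
        have hnt₁ : Nontrivial A₁ := by
          rcases subsingleton_or_nontrivial A₁ with h | h
          · exact absurd ⟨h, hs₂⟩ hnz
          · exact h
        obtain ⟨v, hv⟩ := exists_ne (0 : A₁)
        obtain ⟨L₁, hL₁⟩ := Submodule.exists_isCompl (ℂ ∙ v)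
        have lines := hind (ℂ ∙ v) L₁ ⊥ ⊤ hL₁ isCompl_bot_top
          (by rw [hφp0, Submodule.map_zero])
          (by rw [Submodule.map_bot]; exact bot_le)
          (by rw [hφp0, Submodule.map_zero]; exact bot_le)
          (by rw [hφm0, Submodule.map_zero]; exact bot_le)
        rcases lines with ⟨hsb, _⟩ | ⟨hL₁b, _⟩
        · exact absurd hsb (by simpa [Submodule.span_singleton_eq_bot] using hv)
        · have htop₁ : (ℂ ∙ v) = ⊤ := by
            have := hL₁.sup_eq_top
            rwa [hL₁b, sup_bot_eq] at this
          exact Or.inl ⟨hs₂, aux_equiv_of_span_top hv htop₁⟩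
    · -- `φ⁻` is an isomorphism, `φ⁺ = 0`
      have hR₁top : LinearMap.range φm = ⊤ := by
        have := hC₁.sup_eq_top
        rwa [hC₁b, sup_bot_eq] at this
      have hbij : Function.Bijective φm :=
        ⟨LinearMap.ker_eq_bot.mp hK₂b, LinearMap.range_eq_top.mp hR₁top⟩
      let E : A₂ ≃ₗ[ℂ] A₁ := LinearEquiv.ofBijective φm hbij
      have hnt₂ : Nontrivial A₂ := by
        rcases subsingleton_or_nontrivial A₂ with h | h
        · haveI := h
          exact absurd ⟨E.toEquiv.symm.subsingleton, h⟩ hnz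
        · exact h
      obtain ⟨w, hw⟩ := exists_ne (0 : A₂)
      obtain ⟨L₂, hL₂⟩ := Submodule.exists_isCompl (ℂ ∙ w)
      have hmapc : IsCompl (Submodule.map φm (ℂ ∙ w)) (Submodule.map φm L₂) := by
        simpa using (Submodule.orderIsoMapComapOfBijective φm hbij).isCompl hL₂
      have lines := hind (Submodule.map φm (ℂ ∙ w)) (Submodule.map φm L₂) (ℂ ∙ w) L₂
        hmapc hL₂
        (by rw [hφp0, Submodule.map_zero]; exact bot_le)
        le_rfl
        (by rw [hφp0, Submodule.map_zero]; exact bot_le)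
        le_rfl
      rcases lines with ⟨_, hsb⟩ | ⟨_, hL₂b⟩
      · exact absurd hsb (by simpa [Submodule.span_singleton_eq_bot] using hw)
      · have htop₂ : (ℂ ∙ w) = ⊤ := by
          have := hL₂.sup_eq_top
          rwa [hL₂b, sup_bot_eq] at this
        obtain ⟨e₂⟩ := aux_equiv_of_span_top hw htop₂
        refine Or.inr (Or.inr (Or.inr ⟨E.symm.trans e₂, e₂, fun x => ?_, hφp0⟩))
        have hx : E.symm (φm x) = x := E.symm_apply_eq.mpr rfl
        simp [LinearEquiv.trans_apply, hx]
  · -- `φ⁺` is an isomorphism, `φ⁻ = 0`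
    have hR₂top : LinearMap.range φp = ⊤ := by
      have := hC₂.sup_eq_top
      rwa [hC₂b, sup_bot_eq] at this
    have hbij : Function.Bijective φp :=
      ⟨LinearMap.ker_eq_bot.mp hK₁b, LinearMap.range_eq_top.mp hR₂top⟩
    let E : A₁ ≃ₗ[ℂ] A₂ := LinearEquiv.ofBijective φp hbij
    have hφm0 : φm = 0 := by
      ext w
      obtain ⟨v, rfl⟩ := hbij.2 w
      simpa using hmp v
    have hnt₁ : Nontrivial A₁ := by
      rcases subsingleton_or_nontrivial A₁ with h | h
      · haveI := h
        exact absurd ⟨h, E.toEquiv.symm.subsingleton⟩ hnz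
      · exact h
    obtain ⟨v, hv⟩ := exists_ne (0 : A₁)
    obtain ⟨L₁, hL₁⟩ := Submodule.exists_isCompl (ℂ ∙ v)
    have hmapc : IsCompl (Submodule.map φp (ℂ ∙ v)) (Submodule.map φp L₁) := by
      simpa using (Submodule.orderIsoMapComapOfBijective φp hbij).isCompl hL₁
    have lines := hind (ℂ ∙ v) L₁ (Submodule.map φp (ℂ ∙ v)) (Submodule.map φp L₁)
      hL₁ hmapc
      le_rfl
      (by rw [hφm0, Submodule.map_zero]; exact bot_le)
      le_rfl
      (by rw [hφm0, Submodule.map_zero]; exact bot_le)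
    rcases lines with ⟨hsb, _⟩ | ⟨hL₁b, _⟩
    · exact absurd hsb (by simpa [Submodule.span_singleton_eq_bot] using hv)
    · have htop₁ : (ℂ ∙ v) = ⊤ := by
        have := hL₁.sup_eq_top
        rwa [hL₁b, sup_bot_eq] at this
      obtain ⟨e₁⟩ := aux_equiv_of_span_top hv htop₁
      refine Or.inr (Or.inr (Or.inl ⟨e₁, E.symm.trans e₁, fun x => ?_, hφm0⟩))
      have hx : E.symm (φp x) = x := E.symm_apply_eq.mpr rfl
      simp [LinearEquiv.trans_apply, hx]
end

section
/- Let ρ be a representation of the square quiver V_2 (vertices the 4 corners of a square, arrows along each edge in both directions, with relations: every non-admissible path is zero and any two admissible paths with the same endpoints are equal, where a path is admissible if each coordinate is weakly monotonic along it). If the composition of every two consecutive arrows in ρ is zero, then ρ splits as a direct sum π_1 ⊕ π_2, where π_1 is supported on one 4-cycle orientation of the square and π_2 on the opposite orientation. -/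
/-- Lemma (lm6), splitting step for the square quiver `V₂`: spaces `C₁₁, C₁₂, C₂₁, C₂₂`
at the corners of a square with arrows along each edge in both directions
(`φ⁺ : C₁₁ → C₁₂`, `φ⁻ : C₁₂ → C₁₁`, `ξ⁺ : C₁₁ → C₂₁`, `ξ⁻ : C₂₁ → C₁₁`,
`η⁺ : C₁₂ → C₂₂`, `η⁻ : C₂₂ → C₁₂`, `ψ⁺ : C₂₁ → C₂₂`, `ψ⁻ : C₂₂ → C₂₁`).
If the composition of every two consecutive arrows is zero, then, with
`U_{ij}` the intersection of the kernels of the two maps starting at `C_{ij}`,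
there are complements `D_{ij}` (`C_{ij} = U_{ij} ⊕ D_{ij}`) such that the
representation splits as `π₁ ⊕ π₂`, where `π₁` lives on `(D₁₁, U₁₂, U₂₁, D₂₂)` and
`π₂` on `(U₁₁, D₁₂, D₂₁, U₂₂)`. -/
theorem quiver_V2_radical_square_zero_splitting
    (C₁₁ C₁₂ C₂₁ C₂₂ : Type)
    [AddCommGroup C₁₁] [Module ℂ C₁₁] [AddCommGroup C₁₂] [Module ℂ C₁₂]
    [AddCommGroup C₂₁] [Module ℂ C₂₁] [AddCommGroup C₂₂] [Module ℂ C₂₂]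
    (φp : C₁₁ →ₗ[ℂ] C₁₂) (φm : C₁₂ →ₗ[ℂ] C₁₁)
    (ξp : C₁₁ →ₗ[ℂ] C₂₁) (ξm : C₂₁ →ₗ[ℂ] C₁₁)
    (ηp : C₁₂ →ₗ[ℂ] C₂₂) (ηm : C₂₂ →ₗ[ℂ] C₁₂)
    (ψp : C₂₁ →ₗ[ℂ] C₂₂) (ψm : C₂₂ →ₗ[ℂ] C₂₁)
    -- the composition of every two consecutive arrows is zero:
    (h1 : φp ∘ₗ φm = 0) (h2 : φp ∘ₗ ξm = 0) (h3 : ξp ∘ₗ φm = 0) (h4 : ξp ∘ₗ ξm = 0)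
    (h5 : φm ∘ₗ φp = 0) (h6 : φm ∘ₗ ηm = 0) (h7 : ηp ∘ₗ φp = 0) (h8 : ηp ∘ₗ ηm = 0)
    (h9 : ξm ∘ₗ ξp = 0) (h10 : ξm ∘ₗ ψm = 0) (h11 : ψp ∘ₗ ξp = 0) (h12 : ψp ∘ₗ ψm = 0)
    (h13 : ηm ∘ₗ ηp = 0) (h14 : ηm ∘ₗ ψp = 0) (h15 : ψm ∘ₗ ηp = 0) (h16 : ψm ∘ₗ ψp = 0) :
    ∃ (D₁₁ : Submodule ℂ C₁₁) (D₁₂ : Submodule ℂ C₁₂)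
      (D₂₁ : Submodule ℂ C₂₁) (D₂₂ : Submodule ℂ C₂₂),
      -- the `D`'s are complements of the `U`'s
      IsCompl D₁₁ (LinearMap.ker φp ⊓ LinearMap.ker ξp) ∧
      IsCompl D₁₂ (LinearMap.ker φm ⊓ LinearMap.ker ηp) ∧
      IsCompl D₂₁ (LinearMap.ker ξm ⊓ LinearMap.ker ψp) ∧
      IsCompl D₂₂ (LinearMap.ker ηm ⊓ LinearMap.ker ψm) ∧
      -- `π₁ = (D₁₁, U₁₂, U₂₁, D₂₂)` is a subrepresentation
      (Submodule.map φp D₁₁ ≤ LinearMap.ker φm ⊓ LinearMap.ker ηp ∧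
       Submodule.map ξp D₁₁ ≤ LinearMap.ker ξm ⊓ LinearMap.ker ψp ∧
       Submodule.map ηm D₂₂ ≤ LinearMap.ker φm ⊓ LinearMap.ker ηp ∧
       Submodule.map ψm D₂₂ ≤ LinearMap.ker ξm ⊓ LinearMap.ker ψp ∧
       Submodule.map φm (LinearMap.ker φm ⊓ LinearMap.ker ηp) ≤ D₁₁ ∧
       Submodule.map ηp (LinearMap.ker φm ⊓ LinearMap.ker ηp) ≤ D₂₂ ∧
       Submodule.map ξm (LinearMap.ker ξm ⊓ LinearMap.ker ψp) ≤ D₁₁ ∧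
       Submodule.map ψp (LinearMap.ker ξm ⊓ LinearMap.ker ψp) ≤ D₂₂) ∧
      -- `π₂ = (U₁₁, D₁₂, D₂₁, U₂₂)` is a subrepresentation
      (Submodule.map φm D₁₂ ≤ LinearMap.ker φp ⊓ LinearMap.ker ξp ∧
       Submodule.map ηp D₁₂ ≤ LinearMap.ker ηm ⊓ LinearMap.ker ψm ∧
       Submodule.map ξm D₂₁ ≤ LinearMap.ker φp ⊓ LinearMap.ker ξp ∧
       Submodule.map ψp D₂₁ ≤ LinearMap.ker ηm ⊓ LinearMap.ker ψm ∧
       Submodule.map φp (LinearMap.ker φp ⊓ LinearMap.ker ξp) ≤ D₁₂ ∧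
       Submodule.map ξp (LinearMap.ker φp ⊓ LinearMap.ker ξp) ≤ D₂₁ ∧
       Submodule.map ηm (LinearMap.ker ηm ⊓ LinearMap.ker ψm) ≤ D₁₂ ∧
       Submodule.map ψm (LinearMap.ker ηm ⊓ LinearMap.ker ψm) ≤ D₂₁) := by

  obtain ⟨D₁₁, hD11⟩ := Submodule.exists_isCompl (LinearMap.ker φp ⊓ LinearMap.ker ξp)
  obtain ⟨D₁₂, hD12⟩ := Submodule.exists_isCompl (LinearMap.ker φm ⊓ LinearMap.ker ηp)
  obtain ⟨D₂₁, hD21⟩ := Submodule.exists_isCompl (LinearMap.ker ξm ⊓ LinearMap.ker ψp)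
  obtain ⟨D₂₂, hD22⟩ := Submodule.exists_isCompl (LinearMap.ker ηm ⊓ LinearMap.ker ψm)
  have comp_apply : ∀ {A B C : Type} [AddCommGroup A] [Module ℂ A] [AddCommGroup B]
      [Module ℂ B] [AddCommGroup C] [Module ℂ C] (g : B →ₗ[ℂ] C) (f : A →ₗ[ℂ] B),
      g ∘ₗ f = 0 → ∀ a, g (f a) = 0 := by
    intro A B C _ _ _ _ _ _ g f h a
    have := congrArg (fun m => m a) h
    simpa using this
  refine ⟨D₁₁, D₁₂, D₂₁, D₂₂, hD11.symm, hD12.symm, hD21.symm, hD22.symm, ?_, ?_⟩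
  · refine ⟨?_, ?_, ?_, ?_, ?_, ?_, ?_, ?_⟩
    · rintro x ⟨a, _, rfl⟩
      exact ⟨comp_apply φm φp h5 a, comp_apply ηp φp h7 a⟩
    · rintro x ⟨a, _, rfl⟩
      exact ⟨comp_apply ξm ξp h9 a, comp_apply ψp ξp h11 a⟩
    · rintro x ⟨a, _, rfl⟩
      exact ⟨comp_apply φm ηm h6 a, comp_apply ηp ηm h8 a⟩
    · rintro x ⟨a, _, rfl⟩
      exact ⟨comp_apply ξm ψm h10 a, comp_apply ψp ψm h12 a⟩
    · rintro x ⟨a, ⟨ha1, _⟩, rfl⟩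
      simpa [LinearMap.mem_ker.mp ha1] using (Submodule.zero_mem D₁₁)
    · rintro x ⟨a, ⟨_, ha2⟩, rfl⟩
      simpa [LinearMap.mem_ker.mp ha2] using (Submodule.zero_mem D₂₂)
    · rintro x ⟨a, ⟨ha1, _⟩, rfl⟩
      simpa [LinearMap.mem_ker.mp ha1] using (Submodule.zero_mem D₁₁)
    · rintro x ⟨a, ⟨_, ha2⟩, rfl⟩
      simpa [LinearMap.mem_ker.mp ha2] using (Submodule.zero_mem D₂₂)
  · refine ⟨?_, ?_, ?_, ?_, ?_, ?_, ?_, ?_⟩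
    · rintro x ⟨a, _, rfl⟩
      exact ⟨comp_apply φp φm h1 a, comp_apply ξp φm h3 a⟩
    · rintro x ⟨a, _, rfl⟩
      exact ⟨comp_apply ηm ηp h13 a, comp_apply ψm ηp h15 a⟩
    · rintro x ⟨a, _, rfl⟩
      exact ⟨comp_apply φp ξm h2 a, comp_apply ξp ξm h4 a⟩
    · rintro x ⟨a, _, rfl⟩
      exact ⟨comp_apply ηm ψp h14 a, comp_apply ψm ψp h16 a⟩
    · rintro x ⟨a, ⟨ha1, _⟩, rfl⟩
      simpa [LinearMap.mem_ker.mp ha1] using (Submodule.zero_mem D₁₂)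
    · rintro x ⟨a, ⟨_, ha2⟩, rfl⟩
      simpa [LinearMap.mem_ker.mp ha2] using (Submodule.zero_mem D₂₁)
    · rintro x ⟨a, ⟨ha1, _⟩, rfl⟩
      simpa [LinearMap.mem_ker.mp ha1] using (Submodule.zero_mem D₁₂)
    · rintro x ⟨a, ⟨_, ha2⟩, rfl⟩
      simpa [LinearMap.mem_ker.mp ha2] using (Submodule.zero_mem D₂₁)
end

section
/- For a U_{F_Γ}-module N and μ, ν in the complex span of Γ, the twisting functors satisfy Φ^μ_Γ ∘ Φ^ν_Γ = Φ^{μ+ν}_Γ, Φ^μ_Γ = Id when μ lies in the root lattice Q, and Φ^μ_Γ N is indecomposable if and only if N is indecomposable. -/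
noncomputable section

/-- The generalized binomial coefficient `binom(x, i) = x(x-1)⋯(x-i+1)/i!` for `x ∈ ℂ`. -/
def cBinom (x : ℂ) (i : ℕ) : ℂ := (∏ j ∈ Finset.range i, (x - j)) / (Nat.factorial i)

/-- The adjoint action `ad(a)(u) = a u - u a` in an associative algebra. -/
def adA {A : Type*} [Ring A] (a : A) (u : A) : A := a * u - u * a

/-- `ad(f 0)^(k 0) ∘ ⋯ ∘ ad(f (l-1))^(k (l-1))` applied to `u`. -/
def adIter {A : Type*} [Ring A] {l : ℕ} (f : Fin l → Aˣ) (k : Fin l → ℕ) (u : A) : A :=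
  (List.finRange l).foldr (fun i v => (adA ((f i : A)))^[k i] v) u

/-- The product `f₁^(-k₁) ⋯ f_l^(-k_l)` of negative powers of the invertible elements. -/
def fInvPow {A : Type*} [Ring A] {l : ℕ} (f : Fin l → Aˣ) (k : Fin l → ℕ) : A :=
  (List.ofFn fun i => ((((f i)⁻¹ : Aˣ) : A)) ^ k i).prod

open Finset Polynomial

lemma cBinom_zero_right (x : ℂ) : cBinom x 0 = 1 := by simp [cBinom]

lemma cBinom_zero_left (k : ℕ) : cBinom 0 (k+1) = 0 := by
  have h : ∏ j ∈ Finset.range (k+1), ((0:ℂ) - (j:ℕ)) = 0 :=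
    Finset.prod_eq_zero (Finset.mem_range.2 (Nat.succ_pos k)) (by simp)
  rw [cBinom, h, zero_div]

lemma cBinom_pascal (x : ℂ) (k : ℕ) :
    cBinom (x+1) (k+1) = cBinom x (k+1) + cBinom x k := by
  have hfac : ((Nat.factorial (k+1) : ℂ)) = (k+1) * (Nat.factorial k) := by
    push_cast [Nat.factorial_succ]; ring
  have h1 : ∏ j ∈ Finset.range (k+1), (x + 1 - j) = (∏ j ∈ Finset.range k, (x - j)) * (x+1) := by
    rw [Finset.prod_range_succ']
    congr 1
    · apply Finset.prod_congr rfl; intro j _; push_cast; ring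
    · simp
  have h2 : ∏ j ∈ Finset.range (k+1), (x - j) = (∏ j ∈ Finset.range k, (x - j)) * (x - k) := by
    rw [Finset.prod_range_succ]
  have hk : (Nat.factorial k : ℂ) ≠ 0 := Nat.cast_ne_zero.2 (Nat.factorial_ne_zero k)
  have hk1 : ((k:ℂ)+1) ≠ 0 := by
    have := Nat.cast_ne_zero (R := ℂ).2 (Nat.succ_ne_zero k); push_cast at this ⊢; exact this
  simp only [cBinom, h1, h2, hfac]
  field_simp
  ring

lemma cBinom_nat (n k : ℕ) : cBinom (n : ℂ) k = (n.choose k : ℂ) := by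
  rcases le_or_gt k n with h | h
  · have hprod : ∏ j ∈ Finset.range k, ((n:ℂ) - j) = (n.descFactorial k : ℂ) := by
      rw [Nat.descFactorial_eq_prod_range, Nat.cast_prod]
      apply Finset.prod_congr rfl
      intro j hj
      have : j ≤ n := le_trans (Nat.le_of_lt (Finset.mem_range.1 hj)) h
      push_cast [Nat.cast_sub this]; ring
    rw [cBinom, hprod, Nat.descFactorial_eq_factorial_mul_choose]
    have hk : (Nat.factorial k : ℂ) ≠ 0 := Nat.cast_ne_zero.2 (Nat.factorial_ne_zero k)
    push_cast
    field_simp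
  · have h0 : ((n:ℂ) - (n:ℕ)) = 0 := by simp
    rw [cBinom, Finset.prod_eq_zero (Finset.mem_range.2 h) h0, Nat.choose_eq_zero_of_lt h]
    simp

/-- polynomial whose evaluation is `cBinom · m` -/
def cbp (m : ℕ) : Polynomial ℂ :=
  Polynomial.C ((Nat.factorial m : ℂ)⁻¹) * ∏ j ∈ Finset.range m, (Polynomial.X - Polynomial.C (j:ℂ))

lemma cbp_eval (x : ℂ) (m : ℕ) : (cbp m).eval x = cBinom x m := by
  simp [cbp, cBinom, eval_prod, div_eq_inv_mul, mul_comm]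

lemma poly_eq_of_nat (p q : Polynomial ℂ) (h : ∀ n : ℕ, p.eval (n:ℂ) = q.eval (n:ℂ)) : p = q := by
  have : p - q = 0 := by
    apply Polynomial.eq_zero_of_infinite_isRoot
    apply Set.Infinite.mono (s := Set.range ((↑·) : ℕ → ℂ))
    · rintro _ ⟨n, rfl⟩
      simp [Polynomial.IsRoot, h n]
    · exact Set.infinite_range_of_injective Nat.cast_injective
  exact sub_eq_zero.1 this

lemma chu_nat (a b m : ℕ) :
    cBinom ((a:ℂ)+(b:ℂ)) m = ∑ j ∈ Finset.range (m+1), cBinom (a:ℂ) j * cBinom (b:ℂ) (m-j) := by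
  have : ((a:ℂ)+(b:ℂ)) = (((a+b:ℕ)):ℂ) := by push_cast; ring
  rw [this, cBinom_nat, Nat.add_choose_eq]
  rw [Finset.Nat.sum_antidiagonal_eq_sum_range_succ_mk]
  push_cast
  apply Finset.sum_congr rfl
  intro j _
  rw [cBinom_nat, cBinom_nat]

lemma chu_nat_right (x : ℂ) (b m : ℕ) :
    cBinom (x+(b:ℂ)) m = ∑ j ∈ Finset.range (m+1), cBinom x j * cBinom (b:ℂ) (m-j) := by
  have hp : (cbp m).comp (X + C (b:ℂ)) =
      ∑ j ∈ Finset.range (m+1), C (cBinom (b:ℂ) (m-j)) * cbp j := by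
    apply poly_eq_of_nat
    intro n
    rw [eval_comp]
    simp only [eval_add, eval_X, eval_C, eval_finset_sum, eval_mul, cbp_eval]
    rw [chu_nat n b m]
    apply Finset.sum_congr rfl
    intro j _; ring
  have := congrArg (Polynomial.eval x) hp
  rw [eval_comp] at this
  simp only [eval_add, eval_X, eval_C, eval_finset_sum, eval_mul, cbp_eval] at this
  rw [this]
  apply Finset.sum_congr rfl
  intro j _; ring

lemma chu (x y : ℂ) (m : ℕ) :
    cBinom (x+y) m = ∑ j ∈ Finset.range (m+1), cBinom x j * cBinom y (m-j) := by
  have hp : (cbp m).comp (X + C x) =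
      ∑ j ∈ Finset.range (m+1), C (cBinom x j) * cbp (m-j) := by
    apply poly_eq_of_nat
    intro b
    rw [eval_comp]
    simp only [eval_add, eval_X, eval_C, eval_finset_sum, eval_mul, cbp_eval]
    have h3 : ((b:ℂ) + x) = x + (b:ℂ) := by ring
    rw [h3, chu_nat_right x b m]
  have := congrArg (Polynomial.eval y) hp
  rw [eval_comp] at this
  simp only [eval_add, eval_X, eval_C, eval_finset_sum, eval_mul, cbp_eval] at this
  have h2 : x + y = y + x := by ring
  rw [h2, this]

lemma binom_vanish {l : ℕ} {V : Type*} [AddCommGroup V] [Module ℂ V] (M : ℕ)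
    (v : (Fin l → ℕ) → V)
    (h : ∀ n ∈ Fintype.piFinset (fun _ : Fin l => Finset.range (M+1)),
      ∑ k ∈ Fintype.piFinset (fun _ : Fin l => Finset.range (M+1)),
        (∏ i, ((n i).choose (k i) : ℂ)) • v k = 0) :
    ∀ k ∈ Fintype.piFinset (fun _ : Fin l => Finset.range (M+1)), v k = 0 := by
  suffices H : ∀ (s : ℕ) (k : Fin l → ℕ), k ∈ Fintype.piFinset (fun _ : Fin l => Finset.range (M+1)) →
      (∑ i, k i) = s → v k = 0 by
    intro k hk; exact H (∑ i, k i) k hk rfl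
  intro s
  induction s using Nat.strong_induction_on with
  | _ s ih =>
    intro k hk hs
    have hsum := h k hk
    rw [Finset.sum_eq_single_of_mem k hk] at hsum
    · simpa using hsum
    · intro k' hk' hne
      by_cases hle : ∀ i, k' i ≤ k i
      · have hlt : (∑ i, k' i) < ∑ i, k i := by
          apply Finset.sum_lt_sum (fun i _ => hle i)
          obtain ⟨i, hi⟩ := Function.ne_iff.1 (Ne.symm hne)
          exact ⟨i, Finset.mem_univ i, lt_of_le_of_ne (hle i) (Ne.symm hi)⟩
        rw [ih _ (hs ▸ hlt) k' hk' rfl, smul_zero]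
      · push_neg at hle
        obtain ⟨i, hi⟩ := hle
        have : ((k i).choose (k' i) : ℂ) = 0 := by
          rw [Nat.choose_eq_zero_of_lt hi]; simp
        rw [Finset.prod_eq_zero (Finset.mem_univ i) this, zero_smul]

/-! ### generic fold toolkit -/

section fold
variable {A : Type*} [Ring A] {l : ℕ}

def foldT (T : Fin l → A → A) (L : List (Fin l)) (k : Fin l → ℕ) (u : A) : A :=
  L.foldr (fun i v => (T i)^[k i] v) u

lemma foldT_nil (T : Fin l → A → A) (k u) : foldT T [] k u = u := rfl

lemma foldT_cons (T : Fin l → A → A) (i) (L) (k u) :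
    foldT T (i :: L) k u = (T i)^[k i] (foldT T L k u) := rfl

lemma foldT_zero (T : Fin l → A → A) (hT0 : ∀ i, T i 0 = 0) (L k) : foldT T L k 0 = 0 := by
  induction L with
  | nil => rfl
  | cons i L ih => rw [foldT_cons, ih, Function.iterate_fixed (hT0 i)]

lemma foldT_comm (T : Fin l → A → A) (S : A → A) (hS : ∀ i, Function.Commute S (T i))
    (L k M u) : S^[M] (foldT T L k u) = foldT T L k (S^[M] u) := by
  induction L with
  | nil => rfl
  | cons i L ih =>
    rw [foldT_cons, foldT_cons, ← ih]
    exact ((hS i).iterate_iterate M (k i)) (foldT T L k u)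

lemma foldT_congr (T : Fin l → A → A) {L k k'} (h : ∀ j ∈ L, k j = k' j) (u) :
    foldT T L k u = foldT T L k' u := by
  induction L with
  | nil => rfl
  | cons i L ih =>
    rw [foldT_cons, foldT_cons, h i List.mem_cons_self,
      ih (fun j hj => h j (List.mem_cons_of_mem i hj))]

lemma foldT_extract (T : Fin l → A → A) (hT : ∀ i j, Function.Commute (T i) (T j))
    {L : List (Fin l)} {i : Fin l} (hi : i ∈ L) (hnd : L.Nodup) (k u) :
    foldT T L k u = foldT T L (Function.update k i 0) ((T i)^[k i] u) := by
  obtain ⟨L₁, L₂, rfl⟩ := List.append_of_mem hi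
  have hnd' := hnd
  rw [List.nodup_append] at hnd'
  have hi1 : i ∉ L₁ := fun h => hnd'.2.2 i h i List.mem_cons_self rfl
  have hi2 : i ∉ L₂ := fun h => ((List.nodup_cons.1 hnd'.2.1).1 h)
  have happ : ∀ (k'' : Fin l → ℕ) (w : A), foldT T (L₁ ++ i :: L₂) k'' w
      = foldT T L₁ k'' ((T i)^[k'' i] (foldT T L₂ k'' w)) := by
    intro k'' w
    simp only [foldT, List.foldr_append, List.foldr_cons]
  rw [happ, happ]
  rw [foldT_comm T (T i) (fun j => hT i j) L₂ k (k i) u]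
  rw [Function.update_self]
  simp only [Function.iterate_zero, id_eq]
  have e1 : foldT T L₂ k ((T i)^[k i] u) = foldT T L₂ (Function.update k i 0) ((T i)^[k i] u) :=
    foldT_congr T (fun j hj => (Function.update_of_ne (fun he : j = i => hi2 (he ▸ hj)) 0 k).symm) _
  rw [e1]
  exact foldT_congr T (fun j hj => (Function.update_of_ne (fun he : j = i => hi1 (he ▸ hj)) 0 k).symm) _

lemma foldT_front (T : Fin l → A → A) (hT : ∀ i j, Function.Commute (T i) (T j))
    {L : List (Fin l)} {i : Fin l} (hi : i ∈ L) (hnd : L.Nodup) (k u) :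
    foldT T L k u = (T i)^[k i] (foldT T L (Function.update k i 0) u) := by
  rw [foldT_extract T hT hi hnd k u, foldT_comm T (T i) (fun j => hT i j)]

lemma foldT_id (T : Fin l → A → A) {L k} (h : ∀ j ∈ L, k j = 0) (u) :
    foldT T L k u = u := by
  induction L with
  | nil => rfl
  | cons i L ih =>
    rw [foldT_cons, h i List.mem_cons_self]
    exact ih (fun j hj => h j (List.mem_cons_of_mem i hj))

end fold

/-! ### commutation lemmas for the `f i` -/

section main
variable {l : ℕ} {A : Type*} [Ring A]

lemma adA_eq_lie (c u : A) : adA c u = ⁅c, u⁆ := (Ring.lie_def c u).symm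

lemma adA_zero (c : A) : adA c 0 = 0 := by simp [adA]

lemma adA_mul_right {c w : A} (h : Commute c w) (v : A) : adA c (v * w) = adA c v * w := by
  simp only [adA, sub_mul, mul_assoc, ← h.eq]

lemma adA_iter_mul_right {c w : A} (h : Commute c w) (M : ℕ) (v : A) :
    (adA c)^[M] (v * w) = (adA c)^[M] v * w := by
  induction M with
  | zero => rfl
  | succ M ih => rw [Function.iterate_succ_apply', Function.iterate_succ_apply', ih,
      adA_mul_right h]

variable (f : Fin l → Aˣ) (hcomm : ∀ i j, (f i : A) * (f j : A) = (f j : A) * (f i : A))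
include hcomm

lemma hcominv (i j : Fin l) : Commute ((f i : A)) ((((f j)⁻¹ : Aˣ)) : A) :=
  Commute.units_inv_right (hcomm i j)

lemma hcominv2 (i j : Fin l) : Commute ((((f i)⁻¹ : Aˣ)) : A) ((((f j)⁻¹ : Aˣ)) : A) :=
  Commute.units_inv_left (hcominv f hcomm i j)

lemma comm_ad_ad (i j : Fin l) :
    Function.Commute (adA ((f i : A))) (adA ((f j : A))) := by
  intro u
  simp only [adA_eq_lie]
  letI := LieRing.ofAssociativeRing (A := A)
  rw [leibniz_lie]
  have : ⁅(f i : A), (f j : A)⁆ = 0 := by rw [Ring.lie_def, hcomm i j, sub_self]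
  rw [this, zero_lie, zero_add]

/-- the operator `D_i u = ad(f i)(u) * (f i)⁻¹` -/
def DopF (i : Fin l) (u : A) : A := adA ((f i : A)) u * (((f i)⁻¹ : Aˣ) : A)

omit hcomm in
lemma DopF_zero (i : Fin l) : DopF f i 0 = 0 := by simp [DopF, adA_zero]

lemma DopF_iterate (i : Fin l) (m : ℕ) (u : A) :
    (DopF f i)^[m] u = (adA ((f i : A)))^[m] u * ((((f i)⁻¹ : Aˣ)) : A) ^ m := by
  induction m with
  | zero => simp
  | succ m ih =>
    rw [Function.iterate_succ_apply', ih, DopF,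
      adA_mul_right ((hcominv f hcomm i i).pow_right m), Function.iterate_succ_apply',
      mul_assoc, ← pow_succ]

lemma comm_ad_Dop (i j : Fin l) :
    Function.Commute (adA ((f i : A))) (DopF f j) := by
  intro u
  rw [DopF, DopF, adA_mul_right (hcominv f hcomm i j), comm_ad_ad f hcomm i j u]

lemma comm_Dop_Dop (i j : Fin l) :
    Function.Commute (DopF f i) (DopF f j) := by
  intro u
  simp only [DopF]
  rw [adA_mul_right (hcominv f hcomm i j), adA_mul_right (hcominv f hcomm j i),
    comm_ad_ad f hcomm i j u, mul_assoc, mul_assoc, (hcominv2 f hcomm j i).eq]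

/-- `D_1^(k_1) ⋯ D_l^(k_l) u` -/
def Dpow (k : Fin l → ℕ) (u : A) : A := foldT (DopF f) (List.finRange l) k u

lemma bridgeL (k : Fin l → ℕ) (u : A) : ∀ L : List (Fin l),
    foldT (DopF f) L k u
      = foldT (fun i => adA ((f i : A))) L k u * (L.map fun i => ((((f i)⁻¹ : Aˣ)) : A) ^ k i).prod := by
  intro L
  induction L with
  | nil => simp [foldT_nil]
  | cons i L ih =>
    rw [foldT_cons, foldT_cons, ih, DopF_iterate f hcomm]
    have hP : ∀ y ∈ (L.map fun i => ((((f i)⁻¹ : Aˣ)) : A) ^ k i), Commute ((f i : A)) y := by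
      intro y hy
      obtain ⟨j, _, rfl⟩ := List.mem_map.1 hy
      exact (hcominv f hcomm i j).pow_right (k j)
    have hP' : ∀ y ∈ (L.map fun i => ((((f i)⁻¹ : Aˣ)) : A) ^ k i),
        Commute (((((f i)⁻¹ : Aˣ)) : A) ^ k i) y := by
      intro y hy
      obtain ⟨j, _, rfl⟩ := List.mem_map.1 hy
      exact ((hcominv2 f hcomm i j).pow_pow (k i) (k j))
    rw [adA_iter_mul_right (Commute.list_prod_right _ _ hP) (k i),
      List.map_cons, List.prod_cons, mul_assoc,
      ← (Commute.list_prod_right _ _ hP').eq, ← mul_assoc]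

lemma Dpow_eq (k : Fin l → ℕ) (u : A) :
    adIter f k u * fInvPow f k = Dpow f k u := by
  rw [Dpow, bridgeL f hcomm k u (List.finRange l)]
  congr 1
  rw [fInvPow, List.ofFn_eq_map]

end main

/-! ### the finite sum defining `Θ` and its step property -/

section sums
variable {l : ℕ} {A : Type*} [Ring A] [Algebra ℂ A]

def piBox (l N : ℕ) : Finset (Fin l → ℕ) :=
  Fintype.piFinset (fun _ : Fin l => Finset.range (N+1))

variable (f : Fin l → Aˣ)

def ThetaS (x : Fin l → ℂ) (N : ℕ) (u : A) : A :=
  ∑ k ∈ piBox l N, (∏ i, cBinom (x i) (k i)) • Dpow f k u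

def Ssum (i : Fin l) (x : ℂ) (M : ℕ) (w : A) : A :=
  ∑ m ∈ Finset.range (M+1), cBinom x m • (DopF f i)^[m] w

lemma conj_eq (i : Fin l) (v : A) :
    (f i : A) * v * (((f i)⁻¹ : Aˣ) : A) = v + DopF f i v := by
  have h1 : ((f i : A)) * (((f i)⁻¹ : Aˣ) : A) = 1 := Units.mul_inv _
  rw [DopF, adA, sub_mul, mul_assoc v, h1, mul_one]
  abel

variable (hcomm : ∀ i j, (f i : A) * (f j : A) = (f j : A) * (f i : A))

lemma sum_box_decomp {V : Type*} [AddCommMonoid V] (g : (Fin l → ℕ) → V) (i : Fin l) (N : ℕ) :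
    ∑ k ∈ piBox l N, g k
      = ∑ m ∈ Finset.range (N+1), ∑ k ∈ (piBox l N).filter (fun k => k i = 0),
          g (Function.update k i m) := by
  have hprod : ∑ p ∈ (Finset.range (N+1)) ×ˢ ((piBox l N).filter (fun k => k i = 0)),
      g (Function.update p.2 i p.1)
      = ∑ m ∈ Finset.range (N+1), ∑ k ∈ (piBox l N).filter (fun k => k i = 0),
          g (Function.update k i m) := Finset.sum_product _ _ _
  rw [← hprod]
  apply Finset.sum_nbij' (i := fun k => (k i, Function.update k i 0))
    (j := fun p => Function.update p.2 i p.1)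
  · intro k hk
    rw [Finset.mem_product]
    refine ⟨(Fintype.mem_piFinset.1 hk) i, ?_⟩
    show Function.update k i 0 ∈ _
    rw [Finset.mem_filter]
    refine ⟨?_, by simp⟩
    rw [piBox, Fintype.mem_piFinset]
    intro j
    by_cases hji : j = i
    · subst hji; simp
    · rw [Function.update_of_ne hji]
      exact (Fintype.mem_piFinset.1 hk) j
  · rintro ⟨m, k⟩ hmk
    dsimp only
    rw [Finset.mem_product] at hmk
    obtain ⟨hm, hk⟩ := hmk
    rw [Finset.mem_filter] at hk
    rw [piBox, Fintype.mem_piFinset]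
    intro j
    by_cases hji : j = i
    · subst hji; rw [Function.update_self]; exact hm
    · rw [Function.update_of_ne hji]
      exact (Fintype.mem_piFinset.1 hk.1) j
  · intro k _
    dsimp only
    simp only [Function.update_idem]
    rw [Function.update_eq_self]
  · rintro ⟨m, k⟩ hmk
    dsimp only
    rw [Finset.mem_product, Finset.mem_filter] at hmk
    have hk0 : k i = 0 := hmk.2.2
    simp only [Function.update_self, Function.update_idem]
    rw [Prod.mk.injEq]
    refine ⟨rfl, ?_⟩
    rw [← hk0, Function.update_eq_self]
  · intro k _
    dsimp only
    rw [Function.update_idem, Function.update_eq_self]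

include hcomm

lemma sv_step (i : Fin l) (M : ℕ) (w : A) (hw : (adA ((f i : A)))^[M+1] w = 0) (x : ℂ) :
    Ssum f i (x+1) M w = (f i : A) * Ssum f i x M w * (((f i)⁻¹ : Aˣ) : A) := by
  have hDtop : (DopF f i)^[M+1] w = 0 := by
    rw [DopF_iterate f hcomm, hw, zero_mul]
  simp only [Ssum]
  rw [Finset.mul_sum, Finset.sum_mul]
  have hterm : ∀ m ∈ Finset.range (M+1),
      ((f i : A) * (cBinom x m • (DopF f i)^[m] w)) * (((f i)⁻¹ : Aˣ) : A)
        = cBinom x m • (DopF f i)^[m] w + cBinom x m • (DopF f i)^[m+1] w := by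
    intro m _
    rw [mul_smul_comm, smul_mul_assoc, conj_eq, Function.iterate_succ_apply', smul_add]
  rw [Finset.sum_congr rfl hterm, Finset.sum_add_distrib]
  have h2 : ∑ m ∈ Finset.range (M+1), cBinom x m • (DopF f i)^[m+1] w
      = ∑ m ∈ Finset.range M, cBinom x m • (DopF f i)^[m+1] w := by
    rw [Finset.sum_range_succ, hDtop, smul_zero, add_zero]
  rw [h2]
  rw [Finset.sum_range_succ' (fun m => cBinom (x+1) m • (DopF f i)^[m] w) M]
  rw [Finset.sum_range_succ' (fun m => cBinom x m • (DopF f i)^[m] w) M]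
  simp only [cBinom_pascal, cBinom_zero_right, add_smul, one_smul, Function.iterate_zero, id_eq]
  rw [Finset.sum_add_distrib]
  abel

lemma Dpow_nilp (i : Fin l) (Nn : ℕ) (u : A) (hu : (adA ((f i : A)))^[Nn+1] u = 0)
    (k : Fin l → ℕ) : (adA ((f i : A)))^[Nn+1] (Dpow f k u) = 0 := by
  rw [Dpow, foldT_comm (DopF f) (adA ((f i : A))) (fun j => comm_ad_Dop f hcomm i j), hu]
  exact foldT_zero _ (fun j => DopF_zero f j) _ _

lemma decomp_form (x : Fin l → ℂ) (N : ℕ) (u : A) (i : Fin l) :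
    ThetaS f x N u = ∑ k ∈ (piBox l N).filter (fun k => k i = 0),
      (∏ j ∈ Finset.univ \ {i}, cBinom (x j) (k j)) • Ssum f i (x i) N (Dpow f k u) := by
  rw [ThetaS, sum_box_decomp (g := fun k => (∏ j, cBinom (x j) (k j)) • Dpow f k u) i N,
    Finset.sum_comm]
  apply Finset.sum_congr rfl
  intro k hk
  rw [Finset.mem_filter] at hk
  have hk0 : k i = 0 := hk.2
  have hD : ∀ m, Dpow f (Function.update k i m) u = (DopF f i)^[m] (Dpow f k u) := by
    intro m
    rw [Dpow, foldT_front (DopF f) (fun a b => comm_Dop_Dop f hcomm a b)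
      (List.mem_finRange i) (List.nodup_finRange l) (Function.update k i m) u]
    rw [Function.update_self, Function.update_idem]
    rw [← hk0, Function.update_eq_self]
    rfl
  have hcoef : ∀ m, (∏ j, cBinom (x j) (Function.update k i m j))
      = cBinom (x i) m * ∏ j ∈ Finset.univ \ {i}, cBinom (x j) (k j) := by
    intro m
    have : (fun j => cBinom (x j) (Function.update k i m j))
        = Function.update (fun j => cBinom (x j) (k j)) i (cBinom (x i) m) := by
      funext j
      by_cases hji : j = i
      · subst hji; rw [Function.update_self, Function.update_self]
      · rw [Function.update_of_ne hji, Function.update_of_ne hji]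
    rw [show (∏ j, cBinom (x j) (Function.update k i m j))
        = ∏ j, Function.update (fun j => cBinom (x j) (k j)) i (cBinom (x i) m) j from by
          rw [← this]]
    exact Finset.prod_update_of_mem (Finset.mem_univ i) _ _
  rw [Ssum, Finset.smul_sum]
  apply Finset.sum_congr rfl
  intro m _
  rw [hD, hcoef, mul_comm, mul_smul]

lemma thetaS_step (u : A) (N : ℕ) (hu : ∀ i, (adA ((f i : A)))^[N+1] u = 0)
    (x : Fin l → ℂ) (i : Fin l) :
    ThetaS f (x + Pi.single i 1) N u = (f i : A) * ThetaS f x N u * (((f i)⁻¹ : Aˣ) : A) := by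
  rw [decomp_form f hcomm (x + Pi.single i 1) N u i, decomp_form f hcomm x N u i,
    Finset.mul_sum, Finset.sum_mul]
  apply Finset.sum_congr rfl
  intro k hk
  have hco : ∀ j ∈ Finset.univ \ {i}, cBinom ((x + Pi.single i 1 : Fin l → ℂ) j) (k j) = cBinom (x j) (k j) := by
    intro j hj
    rw [Finset.mem_sdiff, Finset.mem_singleton] at hj
    rw [Pi.add_apply, Pi.single_eq_of_ne hj.2, add_zero]
  rw [Finset.prod_congr rfl hco]
  have hxi : (x + Pi.single i 1 : Fin l → ℂ) i = x i + 1 := by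
    rw [Pi.add_apply, Pi.single_eq_same]
  rw [hxi, sv_step f hcomm i N (Dpow f k u) (Dpow_nilp f hcomm i N u (hu i) k) (x i)]
  rw [mul_smul_comm, smul_mul_assoc]

lemma thetaS_zero (N : ℕ) (u : A) : ThetaS f (0 : Fin l → ℂ) N u = u := by
  rw [ThetaS]
  have h0 : (0 : Fin l → ℕ) ∈ piBox l N := by
    rw [piBox, Fintype.mem_piFinset]; intro j; simp
  rw [Finset.sum_eq_single_of_mem 0 h0]
  · have : ∀ j ∈ Finset.univ, cBinom ((0 : Fin l → ℂ) j) ((0 : Fin l → ℕ) j) = 1 := by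
      intro j _; exact cBinom_zero_right 0
    rw [Finset.prod_congr rfl this, Finset.prod_const_one, one_smul, Dpow]
    exact foldT_id _ (fun j _ => rfl) u
  · intro k _ hne
    obtain ⟨j, hj⟩ := Function.ne_iff.1 hne
    have hj' : k j ≠ 0 := hj
    obtain ⟨m, hm⟩ := Nat.exists_eq_succ_of_ne_zero hj'
    have : cBinom ((0 : Fin l → ℂ) j) (k j) = 0 := by
      rw [Pi.zero_apply, hm]; exact cBinom_zero_left m
    rw [Finset.prod_eq_zero (Finset.mem_univ j) this, zero_smul]

end sums

/-! ### products of the units and integer points -/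

section units
variable {l : ℕ} {A : Type*} [Ring A]
variable (f : Fin l → Aˣ) (hcomm : ∀ i j, (f i : A) * (f j : A) = (f j : A) * (f i : A))
include hcomm

lemma hcu (i j : Fin l) : Commute (f i) (f j) :=
  Units.ext (by simpa [Units.val_mul] using hcomm i j)

lemma cunit_pw (x : Fin l → ℤ) :
    ((Finset.univ : Finset (Fin l)) : Set (Fin l)).Pairwise (Function.onFun Commute fun j => f j ^ x j) :=
  fun a _ b _ _ => (hcu f hcomm a b).zpow_zpow _ _

def cunit (x : Fin l → ℤ) : Aˣ :=
  Finset.univ.noncommProd (fun j => f j ^ x j)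
    (cunit_pw f hcomm x)

lemma cunit_zero : cunit f hcomm 0 = 1 := by
  rw [cunit]
  have h := Finset.noncommProd_eq_pow_card Finset.univ (fun j => f j ^ (0 : Fin l → ℤ) j)
    (fun a _ b _ _ => (hcu f hcomm a b).zpow_zpow _ _) (1 : Aˣ) (fun j _ => by simp)
  rw [h, one_pow]

lemma cunit_add (x y : Fin l → ℤ) :
    cunit f hcomm (x + y) = cunit f hcomm x * cunit f hcomm y := by
  rw [cunit, Finset.noncommProd_congr rfl
    (g := (fun j => f j ^ x j) * fun j => f j ^ y j)
    (fun j _ => by simp [zpow_add]) _]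
  rw [Finset.noncommProd_mul_distrib (fun j => f j ^ x j) (fun j => f j ^ y j)
    (fun a _ b _ _ => (hcu f hcomm a b).zpow_zpow _ _)
    (fun a _ b _ _ => (hcu f hcomm a b).zpow_zpow _ _)
    (fun a _ b _ _ => by exact (hcu f hcomm a b).zpow_zpow _ _)]
  rfl

lemma cunit_single (i : Fin l) : cunit f hcomm (Pi.single i 1) = f i := by
  rw [cunit]
  rw [Finset.noncommProd_congr (Finset.insert_erase (Finset.mem_univ i)).symm
    (g := fun j => f j ^ (Pi.single i 1 : Fin l → ℤ) j) (fun j _ => rfl) _]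
  erw [Finset.noncommProd_insert_of_notMem _ _ _ _ (Finset.notMem_erase i _)]
  have h1 := Finset.noncommProd_eq_pow_card (Finset.univ.erase i)
    (fun j => f j ^ (Pi.single i 1 : Fin l → ℤ) j)
    (fun a _ b _ _ => (hcu f hcomm a b).zpow_zpow _ _) (1 : Aˣ)
    (fun j hj => by
      have hne := Finset.ne_of_mem_erase hj
      simp [Pi.single_eq_of_ne hne])
  rw [h1, one_pow, mul_one, Pi.single_eq_same, zpow_one]

lemma comm_f_cunit (i : Fin l) (x : Fin l → ℤ) : Commute (f i) (cunit f hcomm x) :=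
  Finset.noncommProd_commute _ _ _ _
    (fun j _ => by simpa using (hcu f hcomm i j).zpow_zpow 1 (x j))

lemma cunit_commute (zx zy : Fin l → ℤ) :
    Commute (cunit f hcomm zx) (cunit f hcomm zy) := by
  apply Finset.noncommProd_commute
  intro j _
  exact (Finset.noncommProd_commute _ _ _ _
    (fun j' _ => (hcu f hcomm j j').zpow_zpow (zy j) (zx j'))).symm

lemma cunit_step (x : Fin l → ℤ) (i : Fin l) :
    cunit f hcomm (x + Pi.single i 1) = f i * cunit f hcomm x := by
  rw [cunit_add, cunit_single, ← (comm_f_cunit f hcomm i x).eq]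

omit hcomm in
lemma conj_mul_unit (c d : Aˣ) (u : A) :
    (((c * d) : Aˣ) : A) * u * (((c * d)⁻¹ : Aˣ) : A)
      = (c : A) * ((d : A) * u * ((d⁻¹ : Aˣ) : A)) * ((c⁻¹ : Aˣ) : A) := by
  rw [mul_inv_rev]
  simp [Units.val_mul, mul_assoc]

omit hcomm in
lemma conj_cancel (c : Aˣ) (a b : A) (h : a = (c : A) * b * ((c⁻¹ : Aˣ) : A)) :
    ((c⁻¹ : Aˣ) : A) * a * (c : A) = b := by
  subst h
  rw [mul_assoc ((c : A)) b, Units.inv_mul_cancel_left, mul_assoc, Units.inv_mul, mul_one]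

end units

/-! ### `Θ` at integer points -/

section intpt
variable {l : ℕ} {A : Type*} [Ring A] [Algebra ℂ A]
variable (f : Fin l → Aˣ) (hcomm : ∀ i j, (f i : A) * (f j : A) = (f j : A) * (f i : A))
variable (Θ : (Fin l → ℂ) → (A ≃ₐ[ℂ] A))
variable (hnil : ∀ u : A, ∃ N : ℕ, ∀ i, (adA ((f i : A)))^[N + 1] u = 0)
variable (hΘ : ∀ (x : Fin l → ℂ) (u : A) (N : ℕ), (∀ i, (adA ((f i : A)))^[N + 1] u = 0) →
      Θ x u = ∑ k ∈ Fintype.piFinset (fun _ : Fin l => Finset.range (N + 1)),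
        (∏ i, cBinom (x i) (k i)) • (adIter f k u * fInvPow f k))

include hcomm hΘ

lemma theta_eq_thetaS (x : Fin l → ℂ) (u : A) (N : ℕ)
    (hu : ∀ i, (adA ((f i : A)))^[N + 1] u = 0) : Θ x u = ThetaS f x N u := by
  rw [hΘ x u N hu, ThetaS]
  apply Finset.sum_congr rfl
  intro k _
  rw [Dpow_eq f hcomm]

lemma theta_step (u : A) (x : Fin l → ℂ) (i : Fin l)
    (N : ℕ) (hu : ∀ i, (adA ((f i : A)))^[N + 1] u = 0) :
    Θ (x + Pi.single i 1) u = (f i : A) * Θ x u * (((f i)⁻¹ : Aˣ) : A) := by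
  rw [theta_eq_thetaS f hcomm Θ hΘ _ u N hu, theta_eq_thetaS f hcomm Θ hΘ _ u N hu,
    thetaS_step f hcomm u N hu x i]

lemma theta_zero (u : A) (N : ℕ) (hu : ∀ i, (adA ((f i : A)))^[N + 1] u = 0) :
    Θ (0 : Fin l → ℂ) u = u := by
  rw [theta_eq_thetaS f hcomm Θ hΘ _ u N hu, thetaS_zero f hcomm]

include hnil

lemma theta_int (x : Fin l → ℤ) (u : A) :
    Θ (fun j => (x j : ℂ)) u
      = ((cunit f hcomm x : Aˣ) : A) * u * (((cunit f hcomm x)⁻¹ : Aˣ) : A) := by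
  suffices H : ∀ (s : ℕ) (x : Fin l → ℤ), (∑ j, (x j).natAbs) = s → ∀ u : A,
      Θ (fun j => (x j : ℂ)) u
        = ((cunit f hcomm x : Aˣ) : A) * u * (((cunit f hcomm x)⁻¹ : Aˣ) : A) by
    exact H _ x rfl u
  intro s
  induction s using Nat.strong_induction_on with
  | _ s ih =>
    intro x hs u
    by_cases h0 : ∀ j, x j = 0
    · have hx0 : x = 0 := funext h0
      subst hx0
      have hcast : (fun j => (((0 : Fin l → ℤ) j : ℤ) : ℂ)) = (0 : Fin l → ℂ) := by
        funext j; simp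
      obtain ⟨N, hN⟩ := hnil u
      rw [hcast, theta_zero f hcomm Θ hΘ u N hN, cunit_zero]
      simp
    · push_neg at h0
      obtain ⟨j0, hj0⟩ := h0
      rcases lt_or_gt_of_ne hj0 with hneg | hpos
      · -- x j0 < 0
        set x' := x + Pi.single j0 1 with hx'
        have hsum : (∑ j, (x' j).natAbs) < s := by
          rw [← hs]
          refine Finset.sum_lt_sum (fun j _ => ?_) ⟨j0, Finset.mem_univ j0, ?_⟩
          · by_cases hj : j = j0
            · subst hj; simp only [hx', Pi.add_apply, Pi.single_eq_same]; omega
            · simp only [hx', Pi.add_apply, Pi.single_eq_of_ne hj]; omega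
          · simp only [hx', Pi.add_apply, Pi.single_eq_same]; omega
        obtain ⟨N, hN⟩ := hnil u
        have hstep := theta_step f hcomm Θ hΘ u (fun j => (x j : ℂ)) j0 N hN
        have hcast : ((fun j => (x j : ℂ)) + Pi.single j0 1) = (fun j => (x' j : ℂ)) := by
          funext j
          by_cases hj : j = j0
          · subst hj; simp [hx']
          · simp [hx', Pi.single_eq_of_ne hj]
        rw [hcast] at hstep
        rw [ih _ hsum x' rfl u] at hstep
        have := conj_cancel (f j0) _ _ hstep
        rw [← this]
        have hc : cunit f hcomm x' = f j0 * cunit f hcomm x := cunit_step f hcomm x j0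
        rw [hc, conj_mul_unit]
        rw [conj_cancel (f j0) _ _ rfl]
      · -- x j0 > 0
        set x' := x - Pi.single j0 1 with hx'
        have hxx : x = x' + Pi.single j0 1 := by
          rw [hx']; ring
        have hsum : (∑ j, (x' j).natAbs) < s := by
          rw [← hs]
          refine Finset.sum_lt_sum (fun j _ => ?_) ⟨j0, Finset.mem_univ j0, ?_⟩
          · by_cases hj : j = j0
            · subst hj; simp only [hx', Pi.sub_apply, Pi.single_eq_same]; omega
            · simp only [hx', Pi.sub_apply, Pi.single_eq_of_ne hj]; omega
          · simp only [hx', Pi.sub_apply, Pi.single_eq_same]; omega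
        obtain ⟨N, hN⟩ := hnil u
        have hstep := theta_step f hcomm Θ hΘ u (fun j => (x' j : ℂ)) j0 N hN
        have hcast : ((fun j => (x' j : ℂ)) + Pi.single j0 1) = (fun j => (x j : ℂ)) := by
          funext j
          by_cases hj : j = j0
          · subst hj; simp [hx']
          · simp [hx', Pi.single_eq_of_ne hj]
        rw [hcast] at hstep
        rw [ih _ hsum x' rfl u] at hstep
        rw [hstep]
        have hc : cunit f hcomm x = f j0 * cunit f hcomm x' := by
          rw [hxx, cunit_step]
        rw [hc, conj_mul_unit]

end intpt

/-! ### composition law -/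

section comp
variable {l : ℕ} {A : Type*} [Ring A] [Algebra ℂ A]
variable (f : Fin l → Aˣ) (hcomm : ∀ i j, (f i : A) * (f j : A) = (f j : A) * (f i : A))

lemma adnil_mono (c : A) (u : A) {M M' : ℕ} (h : (adA c)^[M+1] u = 0) (hle : M ≤ M') :
    (adA c)^[M'+1] u = 0 := by
  have he : M' + 1 = (M' - M) + (M + 1) := by omega
  rw [he, Function.iterate_add_apply, h]
  exact Function.iterate_fixed (adA_zero c) _

include hcomm

lemma adIter_out (a : A) (N₁ : ℕ) (hN₁ : ∀ i, (adA ((f i : A)))^[N₁+1] a = 0)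
    (k : Fin l → ℕ) (i : Fin l) (hk : N₁ + 1 ≤ k i) : adIter f k a = 0 := by
  have hit : adIter f k a = foldT (fun i => adA ((f i : A))) (List.finRange l) k a := rfl
  rw [hit, foldT_extract _ (fun a b => comm_ad_ad f hcomm a b) (List.mem_finRange i)
    (List.nodup_finRange l) k a]
  have h0 : (adA ((f i : A)))^[k i] a = 0 := by
    have h2 : k i = (k i - (N₁+1)) + (N₁ + 1) := by omega
    rw [h2, Function.iterate_add_apply, hN₁ i]
    exact Function.iterate_fixed (adA_zero _) _
  rw [h0]
  exact foldT_zero _ (fun j => adA_zero _) _ _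

variable (Θ : (Fin l → ℂ) → (A ≃ₐ[ℂ] A))
variable (hnil : ∀ u : A, ∃ N : ℕ, ∀ i, (adA ((f i : A)))^[N + 1] u = 0)
variable (hΘ : ∀ (x : Fin l → ℂ) (u : A) (N : ℕ), (∀ i, (adA ((f i : A)))^[N + 1] u = 0) →
      Θ x u = ∑ k ∈ Fintype.piFinset (fun _ : Fin l => Finset.range (N + 1)),
        (∏ i, cBinom (x i) (k i)) • (adIter f k u * fInvPow f k))

include hnil hΘ

set_option maxHeartbeats 2000000 in
lemma theta_comp (x y : Fin l → ℂ) (a : A) : Θ y (Θ x a) = Θ (x + y) a := by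
  classical
  obtain ⟨N₁, hN₁⟩ := hnil a
  set w : (Fin l → ℕ) → A := fun k => adIter f k a * fInvPow f k with hw
  set NN : ℕ := max N₁ ((piBox l N₁).sup fun k => Classical.choose (hnil (w k))) with hNN
  have hN1NN : N₁ ≤ NN := le_max_left _ _
  have hNa : ∀ i, (adA ((f i : A)))^[NN + 1] a = 0 :=
    fun i => adnil_mono _ _ (hN₁ i) hN1NN
  have hwz : ∀ k : Fin l → ℕ, k ∉ piBox l N₁ → w k = 0 := by
    intro k hk
    rw [piBox, Fintype.mem_piFinset] at hk
    push_neg at hk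
    obtain ⟨i, hi⟩ := hk
    rw [Finset.mem_range] at hi
    push_neg at hi
    rw [hw]
    dsimp only
    rw [adIter_out f hcomm a N₁ hN₁ k i hi, zero_mul]
  have hNw : ∀ k : Fin l → ℕ, ∀ i, (adA ((f i : A)))^[NN + 1] (w k) = 0 := by
    intro k i
    by_cases hk : k ∈ piBox l N₁
    · refine adnil_mono _ _ (Classical.choose_spec (hnil (w k)) i) ?_
      exact le_trans (Finset.le_sup (f := fun k => Classical.choose (hnil (w k))) hk)
        (le_max_right _ _)
    · rw [hwz k hk]
      exact Function.iterate_fixed (adA_zero _) _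
  have hbox : ∀ N : ℕ, piBox l N = Fintype.piFinset (fun _ : Fin l => Finset.range (N + 1)) :=
    fun N => rfl
  -- first expansion
  have hexp1 : ∀ x' y' : Fin l → ℂ, Θ y' (Θ x' a)
      = ∑ k ∈ piBox l NN, ∑ m ∈ piBox l NN,
        ((∏ i, cBinom (x' i) (k i)) * (∏ i, cBinom (y' i) (m i))) •
          (adIter f m (w k) * fInvPow f m) := by
    intro x' y'
    rw [show Θ x' a = ∑ k ∈ piBox l NN, (∏ i, cBinom (x' i) (k i)) • w k from hΘ x' a NN hNa,
      map_sum]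
    apply Finset.sum_congr rfl
    intro k _
    rw [map_smul, hΘ y' (w k) NN (hNw k), Finset.smul_sum]
    apply Finset.sum_congr rfl
    intro m _
    rw [smul_smul]
  -- second expansion
  have hexp2 : ∀ x' y' : Fin l → ℂ, Θ (x' + y') a
      = ∑ k ∈ piBox l NN, ∑ m ∈ piBox l NN,
        ((∏ i, cBinom (x' i) (k i)) * (∏ i, cBinom (y' i) (m i))) •
          (if ∀ i, k i + m i ≤ NN then w (k + m) else 0) := by
    intro x' y'
    rw [show Θ (x'+y') a = ∑ K ∈ piBox l NN, (∏ i, cBinom ((x'+y') i) (K i)) • w K from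
      hΘ _ a NN hNa]
    have hstep : (∑ K ∈ piBox l NN, (∏ i, cBinom ((x'+y') i) (K i)) • w K)
        = ∑ K ∈ piBox l NN, ∑ j ∈ Fintype.piFinset (fun i => Finset.range (K i + 1)),
            (∏ i, (cBinom (x' i) (j i) * cBinom (y' i) (K i - j i))) • w K := by
      apply Finset.sum_congr rfl
      intro K _
      rw [show (∏ i, cBinom ((x'+y') i) (K i)) = ∏ i, ∑ c ∈ Finset.range (K i + 1),
            cBinom (x' i) c * cBinom (y' i) (K i - c) from
          Finset.prod_congr rfl (fun i _ => by rw [Pi.add_apply, chu]),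
        Finset.prod_univ_sum]
      rw [Finset.sum_smul]
    rw [hstep]
    have e0 : (∑ K ∈ piBox l NN, ∑ j ∈ Fintype.piFinset (fun i => Finset.range (K i + 1)),
            (∏ i, (cBinom (x' i) (j i) * cBinom (y' i) (K i - j i))) • w K)
        = ∑ p ∈ (piBox l NN).sigma (fun K => Fintype.piFinset (fun i => Finset.range (K i + 1))),
            (∏ i, (cBinom (x' i) (p.2 i) * cBinom (y' i) (p.1 i - p.2 i))) • w p.1 :=
      (Finset.sum_sigma (piBox l NN) (fun K => Fintype.piFinset fun i => Finset.range (K i + 1))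
        (fun p => (∏ i, (cBinom (x' i) (p.2 i) * cBinom (y' i) (p.1 i - p.2 i))) • w p.1)).symm
    rw [e0]
    have e1 : (∑ p ∈ (piBox l NN).sigma (fun K => Fintype.piFinset (fun i => Finset.range (K i + 1))),
            (∏ i, (cBinom (x' i) (p.2 i) * cBinom (y' i) (p.1 i - p.2 i))) • w p.1)
        = ∑ q ∈ ((piBox l NN) ×ˢ (piBox l NN)).filter (fun q => ∀ i, q.1 i + q.2 i ≤ NN),
            ((∏ i, cBinom (x' i) (q.1 i)) * (∏ i, cBinom (y' i) (q.2 i))) • w (q.1 + q.2) := by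
      apply Finset.sum_nbij' (i := fun p => (p.2, fun i => p.1 i - p.2 i))
        (j := fun q => ⟨q.1 + q.2, q.1⟩)
      · rintro ⟨K, j⟩ hp
        rw [Finset.mem_sigma] at hp
        obtain ⟨hK, hj⟩ := hp
        dsimp only at hK hj ⊢
        have hKb := Fintype.mem_piFinset.1 hK
        have hjb := Fintype.mem_piFinset.1 hj
        rw [Finset.mem_filter, Finset.mem_product]
        refine ⟨⟨?_, ?_⟩, ?_⟩
        · show j ∈ piBox l NN
          rw [piBox, Fintype.mem_piFinset]
          intro i
          rw [Finset.mem_range]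
          have h1 := Finset.mem_range.1 (hjb i)
          have h2 := Finset.mem_range.1 (hKb i)
          omega
        · show (fun i => K i - j i) ∈ piBox l NN
          rw [piBox, Fintype.mem_piFinset]
          intro i
          have h2 := Finset.mem_range.1 (hKb i)
          have : K i - j i < NN + 1 := by omega
          simpa using this
        · intro i
          have h1 := Finset.mem_range.1 (hjb i)
          have h2 := Finset.mem_range.1 (hKb i)
          dsimp only
          omega
      · rintro ⟨j, m⟩ hq
        rw [Finset.mem_filter, Finset.mem_product] at hq
        obtain ⟨⟨hj, hm⟩, hcond⟩ := hq
        dsimp only at hj hm hcond ⊢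
        rw [Finset.mem_sigma]
        dsimp only
        constructor
        · show j + m ∈ piBox l NN
          rw [piBox, Fintype.mem_piFinset]
          intro i
          rw [Finset.mem_range, Pi.add_apply]
          have := hcond i
          omega
        · rw [Fintype.mem_piFinset]
          intro i
          rw [Finset.mem_range, Pi.add_apply]
          have h1 := Finset.mem_range.1 ((Fintype.mem_piFinset.1 hj) i)
          omega
      · rintro ⟨K, j⟩ hp
        rw [Finset.mem_sigma] at hp
        obtain ⟨hK, hj⟩ := hp
        dsimp only at hj ⊢
        have hjb := Fintype.mem_piFinset.1 hj
        have hfun : (j + fun i => K i - j i) = K := by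
          funext i
          have h1 := Finset.mem_range.1 (hjb i)
          simp only [Pi.add_apply]
          omega
        exact congrArg (fun z => (⟨z, j⟩ : Σ _ : Fin l → ℕ, Fin l → ℕ)) hfun
      · rintro ⟨j, m⟩ hq
        dsimp only
        rw [Prod.mk.injEq]
        refine ⟨rfl, ?_⟩
        funext i
        simp only [Pi.add_apply]
        omega
      · rintro ⟨K, j⟩ hp
        rw [Finset.mem_sigma] at hp
        obtain ⟨hK, hj⟩ := hp
        dsimp only at hj ⊢
        have hjb := Fintype.mem_piFinset.1 hj
        have hfun : (j + fun i => K i - j i) = K := by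
          funext i
          have h1 := Finset.mem_range.1 (hjb i)
          simp only [Pi.add_apply]
          omega
        rw [hfun, Finset.prod_mul_distrib]
    rw [e1, Finset.sum_filter, Finset.sum_product]
    apply Finset.sum_congr rfl
    intro k _
    apply Finset.sum_congr rfl
    intro m _
    by_cases hc : ∀ i, k i + m i ≤ NN
    · rw [if_pos hc, if_pos hc]
    · rw [if_neg hc, if_neg hc, smul_zero]
  -- value at natural points
  have hcastadd : ∀ n n' : Fin l → ℕ,
      ((fun j => ((n j : ℤ) : ℂ)) + (fun j => ((n' j : ℤ) : ℂ)))
        = fun j => (((n j : ℤ) + (n' j : ℤ) : ℤ) : ℂ) := by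
    intro n n'
    funext j
    push_cast
    rfl
  have hnat : ∀ n n' : Fin l → ℕ,
      Θ (fun j => ((n' j : ℤ) : ℂ)) (Θ (fun j => ((n j : ℤ) : ℂ)) a)
        = Θ ((fun j => ((n j : ℤ) : ℂ)) + fun j => ((n' j : ℤ) : ℂ)) a := by
    intro n n'
    rw [theta_int f hcomm Θ hnil hΘ (fun j => (n j : ℤ)) a]
    rw [theta_int f hcomm Θ hnil hΘ (fun j => (n' j : ℤ)) _]
    rw [hcastadd n n']
    rw [show (fun j => (((n j : ℤ) + (n' j : ℤ) : ℤ) : ℂ))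
        = fun j => ((((fun j => (n j : ℤ)) + fun j => (n' j : ℤ)) j : ℤ) : ℂ) from rfl]
    rw [theta_int f hcomm Θ hnil hΘ ((fun j => (n j : ℤ)) + fun j => (n' j : ℤ)) a]
    rw [cunit_add f hcomm, (cunit_commute f hcomm _ _).eq, conj_mul_unit]
  -- coefficients at natural points are binomial coefficients
  have hcb : ∀ (n : Fin l → ℕ) (k : Fin l → ℕ),
      (∏ i, cBinom (((n i : ℤ) : ℂ)) (k i)) = ∏ i, ((n i).choose (k i) : ℂ) := by
    intro n k
    apply Finset.prod_congr rfl
    intro i _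
    rw [show (((n i : ℤ) : ℂ)) = ((n i : ℕ) : ℂ) from by push_cast; rfl, cBinom_nat]
  -- the difference family
  set v : (Fin l → ℕ) → (Fin l → ℕ) → A := fun k m =>
    (adIter f m (w k) * fInvPow f m) - (if ∀ i, k i + m i ≤ NN then w (k + m) else 0) with hv
  have hzero : ∀ n n' : Fin l → ℕ,
      (∑ k ∈ piBox l NN, ∑ m ∈ piBox l NN,
        ((∏ i, ((n i).choose (k i) : ℂ)) * (∏ i, ((n' i).choose (m i) : ℂ))) • v k m) = 0 := by
    intro n n'
    have h1 := hexp1 (fun j => ((n j : ℤ) : ℂ)) (fun j => ((n' j : ℤ) : ℂ))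
    have h2 := hexp2 (fun j => ((n j : ℤ) : ℂ)) (fun j => ((n' j : ℤ) : ℂ))
    have h3 := hnat n n'
    rw [h1, h2] at h3
    have e : (∑ k ∈ piBox l NN, ∑ m ∈ piBox l NN,
        ((∏ i, ((n i).choose (k i) : ℂ)) * (∏ i, ((n' i).choose (m i) : ℂ))) • v k m)
      = (∑ k ∈ piBox l NN, ∑ m ∈ piBox l NN,
          ((∏ i, cBinom (((n i : ℤ) : ℂ)) (k i)) * (∏ i, cBinom (((n' i : ℤ) : ℂ)) (m i))) •
            (adIter f m (w k) * fInvPow f m))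
        - (∑ k ∈ piBox l NN, ∑ m ∈ piBox l NN,
          ((∏ i, cBinom (((n i : ℤ) : ℂ)) (k i)) * (∏ i, cBinom (((n' i : ℤ) : ℂ)) (m i))) •
            (if ∀ i, k i + m i ≤ NN then w (k + m) else 0)) := by
      rw [← Finset.sum_sub_distrib]
      apply Finset.sum_congr rfl; intro k _
      rw [← Finset.sum_sub_distrib]
      apply Finset.sum_congr rfl; intro m _
      rw [hv]
      dsimp only
      rw [smul_sub, hcb, hcb]
    rw [e, sub_eq_zero]
    exact h3
  -- vanishing of the coefficient family
  have hvan : ∀ k ∈ piBox l NN, ∀ m ∈ piBox l NN, v k m = 0 := by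
    have stage1 : ∀ n : Fin l → ℕ, ∀ m ∈ piBox l NN,
        (∑ k ∈ piBox l NN, (∏ i, ((n i).choose (k i) : ℂ)) • v k m) = 0 := by
      intro n
      apply binom_vanish NN
        (fun m => ∑ k ∈ piBox l NN, (∏ i, ((n i).choose (k i) : ℂ)) • v k m)
      intro n' hn'
      have h0 := hzero n n'
      rw [← h0, Finset.sum_comm]
      apply Finset.sum_congr rfl; intro m _
      rw [Finset.smul_sum]
      apply Finset.sum_congr rfl; intro k _
      rw [smul_smul, mul_comm]
    intro k hk m hm
    exact binom_vanish NN (fun k => v k m) (fun n _ => stage1 n m hm) k hk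
  -- conclusion
  rw [hexp1 x y, hexp2 x y]
  apply Finset.sum_congr rfl; intro k hk
  apply Finset.sum_congr rfl; intro m hm
  congr 1
  have hvkm := hvan k hk m hm
  rw [hv] at hvkm
  dsimp only at hvkm
  exact sub_eq_zero.1 hvkm

end comp


set_option maxHeartbeats 1000000 in
/-- Lemma (lmnew): properties of the twisting functors `Φ^μ_Γ`. Here `A` abstracts the Ore
localization `U_{F_Γ}` of the enveloping algebra at the multiplicative set generated by
commuting root vectors `f_{γ_1}, …, f_{γ_l}` (which are invertible in `A`, with locally
nilpotent adjoint action), and `Θ x` is the generalized conjugation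
`Θ_{(x₁,…,x_l)}(u) = Σ binom(x₁,i₁)⋯binom(x_l,i_l) ad(f₁)^{i₁}⋯ad(f_l)^{i_l}(u)
f₁^{-i₁}⋯f_l^{-i_l}`. The twist `Φ^x N` of a module `N` is `N` with action composed with
`Θ x`. Then: (i) `Φ^μ ∘ Φ^ν = Φ^{μ+ν}`; (ii) `Φ^μ = Id` (canonically isomorphic to the
identity) for `μ` in the lattice `Q = ℤΓ`; (iii) `Φ^μ N` is indecomposable iff `N` is. -/
theorem twisting_functor_properties
    (l : ℕ) (A : Type) [Ring A] [Algebra ℂ A]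
    (f : Fin l → Aˣ)
    (hcomm : ∀ i j, (f i : A) * (f j : A) = (f j : A) * (f i : A))
    -- local nilpotency of the adjoint action of the `f i`
    (hnil : ∀ u : A, ∃ N : ℕ, ∀ i, (adA ((f i : A)))^[N + 1] u = 0)
    -- `Θ x` is the generalized conjugation, given by Mathieu's finite sum formula
    (Θ : (Fin l → ℂ) → (A ≃ₐ[ℂ] A))
    (hΘ : ∀ (x : Fin l → ℂ) (u : A) (N : ℕ), (∀ i, (adA ((f i : A)))^[N + 1] u = 0) →
      Θ x u = ∑ k ∈ Fintype.piFinset (fun _ : Fin l => Finset.range (N + 1)),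
        (∏ i, cBinom (x i) (k i)) • (adIter f k u * fInvPow f k))
    -- an arbitrary `U_{F_Γ}`-module `N`
    (N : Type) [AddCommGroup N] [Module A N] :
    -- (i) `Φ^x ∘ Φ^y = Φ^{x+y}`
    (∀ x y : Fin l → ℂ,
      @Module.compHom A A N _ _ (Module.compHom N ((Θ y).toRingEquiv.toRingHom)) _
          ((Θ x).toRingEquiv.toRingHom)
        = Module.compHom N ((Θ (x + y)).toRingEquiv.toRingHom)) ∧
    -- (ii) `Φ^x = Id` whenever `x ∈ Q = ℤΓ`: the twist is isomorphic to the original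
    (∀ x : Fin l → ℤ, ∃ e : N ≃+ N, ∀ (a : A) (v : N),
      e ((Θ (fun i => (x i : ℂ)) a) • v) = a • e v) ∧
    -- (iii) `N` is indecomposable iff `Φ^x N` is indecomposable
    (∀ x : Fin l → ℂ,
      ((∀ P Q : Submodule A N, IsCompl P Q → P = ⊥ ∨ Q = ⊥) ↔
        (∀ P Q : @Submodule A N _ _ (Module.compHom N ((Θ x).toRingEquiv.toRingHom)),
          IsCompl P Q → P = ⊥ ∨ Q = ⊥))) := by
  classical
  refine ⟨?_, ?_, ?_⟩
  · -- (i)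
    intro x y
    apply Module.ext
    funext a v
    show (Θ y) ((Θ x) a) • v = (Θ (x + y)) a • v
    rw [theta_comp f hcomm Θ hnil hΘ x y a]
  · -- (ii)
    intro x
    refine ⟨{ toFun := fun v => (((cunit f hcomm x)⁻¹ : Aˣ) : A) • v,
              invFun := fun v => ((cunit f hcomm x : Aˣ) : A) • v,
              left_inv := fun v => by
                show ((cunit f hcomm x : Aˣ) : A) • ((((cunit f hcomm x)⁻¹ : Aˣ) : A) • v) = v
                rw [← mul_smul, Units.mul_inv, one_smul],
              right_inv := fun v => by
                show (((cunit f hcomm x)⁻¹ : Aˣ) : A) • (((cunit f hcomm x : Aˣ) : A) • v) = v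
                rw [← mul_smul, Units.inv_mul, one_smul],
              map_add' := fun v w => smul_add _ _ _ }, ?_⟩
    intro a v
    show (((cunit f hcomm x)⁻¹ : Aˣ) : A) • ((Θ (fun i => (x i : ℂ))) a • v)
        = a • ((((cunit f hcomm x)⁻¹ : Aˣ) : A) • v)
    rw [theta_int f hcomm Θ hnil hΘ x a, ← mul_smul, ← mul_smul]
    congr 1
    rw [mul_assoc ((cunit f hcomm x : Aˣ) : A) a, Units.inv_mul_cancel_left]
  · -- (iii)
    intro x
    have mkOrig : ∀ P : @Submodule A N _ _ (Module.compHom N ((Θ x).toRingEquiv.toRingHom)),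
        ∃ P' : Submodule A N, ∀ v : N, v ∈ P' ↔ v ∈ P := by
      intro P
      refine ⟨@Submodule.mk A N _ _ _
        ⟨⟨{v : N | v ∈ P}, fun ha hb => P.add_mem ha hb⟩, P.zero_mem⟩ ?_, fun v => Iff.rfl⟩
      intro a v hv
      have h1 := @Submodule.smul_mem' A N _ _ (Module.compHom N ((Θ x).toRingEquiv.toRingHom)) P
        ((Θ x).symm a) v hv
      have h2 : ((Θ x) ((Θ x).symm a)) • v ∈ {v : N | v ∈ P} := h1
      rwa [AlgEquiv.apply_symm_apply] at h2
    have mkTw : ∀ P' : Submodule A N,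
        ∃ P : @Submodule A N _ _ (Module.compHom N ((Θ x).toRingEquiv.toRingHom)),
        ∀ v : N, v ∈ P ↔ v ∈ P' := by
      intro P'
      refine ⟨@Submodule.mk A N _ _ (Module.compHom N ((Θ x).toRingEquiv.toRingHom))
        ⟨⟨{v : N | v ∈ P'}, fun ha hb => P'.add_mem ha hb⟩, P'.zero_mem⟩ ?_, fun v => Iff.rfl⟩
      intro a v hv
      show ((Θ x) a) • v ∈ {v : N | v ∈ P'}
      exact P'.smul_mem _ hv
    constructor
    · intro H P Q hPQ
      obtain ⟨P', hP⟩ := mkOrig P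
      obtain ⟨Q', hQ⟩ := mkOrig Q
      rw [isCompl_iff] at hPQ
      have hPQ' : IsCompl P' Q' := by
        rw [isCompl_iff]
        constructor
        · rw [Submodule.disjoint_def]
          intro v hv1 hv2
          exact (@Submodule.disjoint_def A N _ _
            (Module.compHom N ((Θ x).toRingEquiv.toRingHom)) P Q).1 hPQ.1 v
            ((hP v).1 hv1) ((hQ v).1 hv2)
        · rw [codisjoint_iff, Submodule.eq_top_iff']
          intro v
          have hv : v ∈ (P ⊔ Q : @Submodule A N _ _
              (Module.compHom N ((Θ x).toRingEquiv.toRingHom))) := by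
            rw [codisjoint_iff.1 hPQ.2]
            exact @Submodule.mem_top A N _ _
              (Module.compHom N ((Θ x).toRingEquiv.toRingHom)) v
          obtain ⟨p, hp, q, hq, hpq⟩ := (@Submodule.mem_sup A N _ _
            (Module.compHom N ((Θ x).toRingEquiv.toRingHom)) v P Q).1 hv
          exact Submodule.mem_sup.2 ⟨p, (hP p).2 hp, q, (hQ q).2 hq, hpq⟩
      rcases H P' Q' hPQ' with h | h
      · left
        rw [Submodule.eq_bot_iff] at h
        refine (@Submodule.eq_bot_iff A N _ _
          (Module.compHom N ((Θ x).toRingEquiv.toRingHom)) P).2 ?_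
        exact fun v hv => h v ((hP v).2 hv)
      · right
        rw [Submodule.eq_bot_iff] at h
        refine (@Submodule.eq_bot_iff A N _ _
          (Module.compHom N ((Θ x).toRingEquiv.toRingHom)) Q).2 ?_
        exact fun v hv => h v ((hQ v).2 hv)
    · intro H P' Q' hPQ
      obtain ⟨P, hP⟩ := mkTw P'
      obtain ⟨Q, hQ⟩ := mkTw Q'
      rw [isCompl_iff] at hPQ
      have hPQ' : IsCompl P Q := by
        rw [isCompl_iff]
        constructor
        · rw [@Submodule.disjoint_def A N _ _
            (Module.compHom N ((Θ x).toRingEquiv.toRingHom)) P Q]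
          intro v hv1 hv2
          exact (Submodule.disjoint_def.1 hPQ.1) v ((hP v).1 hv1) ((hQ v).1 hv2)
        · rw [codisjoint_iff, @Submodule.eq_top_iff' A N _ _
            (Module.compHom N ((Θ x).toRingEquiv.toRingHom)) (P ⊔ Q)]
          intro v
          have hv : v ∈ (P' ⊔ Q' : Submodule A N) := by
            rw [codisjoint_iff.1 hPQ.2]
            trivial
          obtain ⟨p, hp, q, hq, hpq⟩ := Submodule.mem_sup.1 hv
          exact (@Submodule.mem_sup A N _ _
            (Module.compHom N ((Θ x).toRingEquiv.toRingHom)) v P Q).2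
            ⟨p, (hP p).2 hp, q, (hQ q).2 hq, hpq⟩
      rcases H P Q hPQ' with h | h
      · left
        have h2 := (@Submodule.eq_bot_iff A N _ _
          (Module.compHom N ((Θ x).toRingEquiv.toRingHom)) P).1 h
        rw [Submodule.eq_bot_iff]
        exact fun v hv => h2 v ((hP v).2 hv)
      · right
        have h2 := (@Submodule.eq_bot_iff A N _ _
          (Module.compHom N ((Θ x).toRingEquiv.toRingHom)) Q).1 h
        rw [Submodule.eq_bot_iff]
        exact fun v hv => h2 v ((hQ v).2 hv)


end
end
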